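/- arXiv:1506.01313 — 11 statements merged into one kernel-verified Lean document; each statement's English description precedes it below -/
import Mathlib

section
/- For every integer ν ≥ 1 and all nonnegative integers j ≤ k, the rational number ((2ν−1)!/ν!) · A_{k,j}(ν) is an integer; that is, A_{k,j}(ν) ∈ (ν!/(2ν−1)!)·ℤ. -/
/-!
By Legendre's formula, `(j+ν)! (m+ν)!` divides `C(j+m, j) (j+m+ν)! (2ν-1)!` once, for every
`q > 0`, the floors satisfy `⌊j/q⌋ + ⌊m/q⌋ + ⌊(j+ν)/q⌋ + ⌊(m+ν)/q⌋ ≤ ⌊(j+m)/q⌋ + ⌊(j+m+ν)/q⌋ +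
⌊(2ν-1)/q⌋`. Reducing `j, m, ν` modulo `q` leaves a comparison of carries: the only delicate case
is when both `j + ν` and `m + ν` carry but `j + m` does not, and then `2 (ν mod q) > q`, so
`⌊(2ν-1)/q⌋` picks up the missing unit.
-/

/-- `A ν k j` is the rational number `A_{k,j}(ν) = C(k,j)·(k+ν)!·ν! / ((k−j+ν)!·(j+ν)!)`. -/
def A (ν k j : ℕ) : ℚ :=
  (Nat.choose k j : ℚ) * ((k + ν).factorial : ℚ) * (ν.factorial : ℚ) /
    (((k - j + ν).factorial : ℚ) * ((j + ν).factorial : ℚ))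

open Finset Nat

theorem Nat.prod_factorial_dvd_prod_factorial_of_sum_div_le {ι κ : Type*} (s : Finset ι)
    (t : Finset κ) (a : ι → ℕ) (b : κ → ℕ)
    (h : ∀ q, 0 < q → ∑ i ∈ s, a i / q ≤ ∑ i ∈ t, b i / q) :
    ∏ i ∈ s, (a i)! ∣ ∏ i ∈ t, (b i)! := by
  rw [← factorization_le_iff_dvd (prod_ne_zero_iff.mpr fun _ _ => factorial_ne_zero _)
    (prod_ne_zero_iff.mpr fun _ _ => factorial_ne_zero _)]
  intro p
  by_cases hp : p.Prime
  · set B := ∑ i ∈ s, a i + ∑ i ∈ t, b i + 1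
    have legendre : ∀ n, n < B → (n)!.factorization p = ∑ k ∈ Ico 1 B, n / p ^ k :=
      fun n hn => factorization_factorial hp ((log_le_self p n).trans_lt hn)
    have hsB : ∀ i ∈ s, a i < B := fun i hi => by
      have := single_le_sum (fun i _ => Nat.zero_le (a i)) hi; omega
    have htB : ∀ i ∈ t, b i < B := fun i hi => by
      have := single_le_sum (fun i _ => Nat.zero_le (b i)) hi; omega
    rw [factorization_prod fun _ _ => factorial_ne_zero _,
      factorization_prod fun _ _ => factorial_ne_zero _, Finsupp.finsetSum_apply,
      Finsupp.finsetSum_apply, sum_congr rfl fun i hi => legendre _ (hsB i hi),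
      sum_congr rfl fun i hi => legendre _ (htB i hi), sum_comm, sum_comm (s := t)]
    exact sum_le_sum fun k _ => h _ (pow_pos hp.pos k)
  · simp [factorization_eq_zero_of_not_prime _ hp]

theorem Nat.div_eq_ite_of_lt_three_mul {x q : ℕ} (hx : x < 3 * q) :
    x / q = if 2 * q ≤ x then 2 else if q ≤ x then 1 else 0 := by
  split_ifs with h2 h1
  · exact Nat.div_eq_of_lt_le (by omega) (by omega)
  · exact Nat.div_eq_of_lt_le (by omega) (by omega)
  · exact div_eq_of_lt (by omega)

theorem Nat.div_add_div_add_div_add_div_le {q : ℕ} (hq : 0 < q) (j m ν : ℕ) :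
    j / q + m / q + (j + ν) / q + (m + ν) / q ≤
      (j + m) / q + (j + m + ν) / q + (2 * ν - 1) / q := by
  -- this settles the case `q ∣ ν`, where none of `j + ν`, `m + ν` carries
  have hν : ν / q ≤ (2 * ν - 1) / q := Nat.div_le_div_right (by omega)
  obtain ⟨a, r, hr, rfl⟩ : ∃ a r, r < q ∧ j = r + q * a :=
    ⟨j / q, j % q, mod_lt _ hq, (mod_add_div j q).symm⟩
  obtain ⟨b, s, hs, rfl⟩ : ∃ b s, s < q ∧ m = s + q * b :=
    ⟨m / q, m % q, mod_lt _ hq, (mod_add_div m q).symm⟩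
  obtain ⟨c, t, ht, rfl⟩ : ∃ c t, t < q ∧ ν = t + q * c :=
    ⟨ν / q, ν % q, mod_lt _ hq, (mod_add_div ν q).symm⟩
  have shift : ∀ x y, (x + q * y) / q = x / q + y := fun x y => add_mul_div_left x y hq
  rw [show r + q * a + (t + q * c) = r + t + q * (a + c) by ring,
    show s + q * b + (t + q * c) = s + t + q * (b + c) by ring,
    show r + q * a + (s + q * b) = r + s + q * (a + b) by ring,
    show r + s + q * (a + b) + (t + q * c) = r + s + t + q * (a + b + c) by ring]
  simp only [shift, div_eq_of_lt hr, div_eq_of_lt hs, div_eq_of_lt ht] at hν ⊢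
  rcases Nat.eq_zero_or_pos t with rfl | ht0
  · simp only [Nat.add_zero, Nat.zero_add, div_eq_of_lt hr, div_eq_of_lt hs] at hν ⊢
    have := Nat.zero_le ((r + s) / q)
    omega
  · rw [show 2 * (t + q * c) - 1 = 2 * t - 1 + q * (2 * c) by rw [Nat.mul_left_comm]; omega,
      shift,
      div_eq_ite_of_lt_three_mul (x := r + t) (by omega),
      div_eq_ite_of_lt_three_mul (x := s + t) (by omega),
      div_eq_ite_of_lt_three_mul (x := r + s) (by omega),
      div_eq_ite_of_lt_three_mul (x := r + s + t) (by omega),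
      div_eq_ite_of_lt_three_mul (x := 2 * t - 1) (by omega)]
    split_ifs <;> omega

theorem Nat.factorial_mul_factorial_dvd_choose_mul_factorial_mul_factorial (ν j m : ℕ) :
    (j + ν)! * (m + ν)! ∣ (j + m).choose j * (j + m + ν)! * (2 * ν - 1)! := by
  have h := prod_factorial_dvd_prod_factorial_of_sum_div_le univ univ ![j, m, j + ν, m + ν]
    ![j + m, j + m + ν, 2 * ν - 1] fun q hq => by
      simpa [Fin.sum_univ_four, Fin.sum_univ_three, add_assoc] using
        div_add_div_add_div_add_div_le hq j m ν
  simp only [Fin.prod_univ_four, Fin.prod_univ_three, Matrix.cons_val] at h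
  rw [← choose_mul_factorial_mul_factorial (Nat.le_add_right j m), Nat.add_sub_cancel_left] at h
  exact Nat.dvd_of_mul_dvd_mul_left (mul_pos (factorial_pos j) (factorial_pos m))
    (by convert h using 1 <;> ring)

theorem stmt0_general (ν : ℕ) (k j : ℕ) (hjk : j ≤ k) :
    ∃ z : ℤ, (((2 * ν - 1).factorial : ℚ) / (ν.factorial : ℚ)) * A ν k j = (z : ℚ) := by
  obtain ⟨m, rfl⟩ := Nat.exists_eq_add_of_le hjk
  obtain ⟨z, hz⟩ := factorial_mul_factorial_dvd_choose_mul_factorial_mul_factorial ν j m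
  refine ⟨z, ?_⟩
  have hzℚ : ((j + m).choose j : ℚ) * (j + m + ν)! * (2 * ν - 1)! = (j + ν)! * (m + ν)! * z := by
    exact_mod_cast hz
  rw [A, Nat.add_sub_cancel_left]
  field_simp
  linear_combination hzℚ

/-- For every `ν ≥ 1` and all `j ≤ k`, `((2ν−1)!/ν!) · A_{k,j}(ν)` is an integer. -/
theorem stmt0 (ν : ℕ) (hν : 1 ≤ ν) (k j : ℕ) (hjk : j ≤ k) :
    ∃ z : ℤ, (((2 * ν - 1).factorial : ℚ) / (ν.factorial : ℚ)) * A ν k j = (z : ℚ) :=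
  stmt0_general ν k j hjk
end

section
/- For every integer ν ≥ 1, the least positive integer r with the property that r · A_{k,j}(ν) is an integer for all nonnegative integers j ≤ k exists and divides (2ν−1)!/ν!. -/
/-!
By Legendre's formula, a product of factorials `∏ aᵢ!` divides `∏ bᵢ!` as soon as
`∑ ⌊aᵢ/q⌋ ≤ ∑ ⌊bᵢ/q⌋` for every `q ≥ 1`. For `m = k - j` this criterion, together with a case
analysis on residues mod `q`, gives `(m+ν)! (j+ν)! m! j! ∣ (2ν-1)! (m+j)! (m+j+ν)!`, which says
exactly that `(2ν-1)!/ν! · A_{k,j}(ν)` is an integer. The integers `r` with `r·A_{k,j}(ν) ∈ ℤ` for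
all `j ≤ k` are closed under remainders, so the least positive one divides every other one.
-/

open Nat

namespace Nat

lemma factorization_prod_map_factorial (s : Multiset ℕ) (p : ℕ) :
    (s.map factorial).prod.factorization p = (s.map fun n => (n)!.factorization p).sum := by
  induction s using Multiset.induction_on with
  | empty => simp
  | cons a s ih =>
    have hs : (s.map factorial).prod ≠ 0 := by
      simp [Multiset.prod_eq_zero_iff, factorial_ne_zero]
    simp [factorization_mul (factorial_ne_zero a) hs, ih]

lemma factorization_prod_map_factorial_eq_sum {p b : ℕ} (hp : p.Prime) {s : Multiset ℕ}
    (hb : s.sum < b) :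
    (s.map factorial).prod.factorization p = ∑ i ∈ Finset.Ico 1 b, (s.map (· / p ^ i)).sum := by
  rw [factorization_prod_map_factorial, Finset.sum_eq_multiset_sum, Multiset.sum_map_sum_map]
  congr 1
  refine Multiset.map_congr rfl fun n hn => ?_
  rw [factorization_factorial hp ((log_le_self p n).trans_lt
    ((Multiset.le_sum_of_mem hn).trans_lt hb)), Finset.sum_eq_multiset_sum]

theorem prod_map_factorial_dvd {s t : Multiset ℕ}
    (h : ∀ q, 0 < q → (s.map (· / q)).sum ≤ (t.map (· / q)).sum) :
    (s.map factorial).prod ∣ (t.map factorial).prod := by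
  have hne : ∀ u : Multiset ℕ, (u.map factorial).prod ≠ 0 := fun u => by
    simp [Multiset.prod_eq_zero_iff, factorial_ne_zero]
  rw [← factorization_le_iff_dvd (hne s) (hne t)]
  intro p
  by_cases hp : p.Prime
  · have hs : s.sum < (s + t).sum + 1 := by simp only [Multiset.sum_add]; omega
    have ht : t.sum < (s + t).sum + 1 := by simp only [Multiset.sum_add]; omega
    rw [factorization_prod_map_factorial_eq_sum hp hs, factorization_prod_map_factorial_eq_sum hp ht]
    exact Finset.sum_le_sum fun i _ => h _ (pow_pos hp.pos i)
  · simp [factorization_eq_zero_of_not_prime _ hp]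

lemma div_add_div_add_div_add_div_le_s1 {ν : ℕ} (hν : 0 < ν) (q m j : ℕ) :
    (m + ν) / q + (j + ν) / q + m / q + j / q ≤
      (2 * ν - 1) / q + (m + j) / q + (m + j + ν) / q := by
  obtain ⟨μ, rfl⟩ : ∃ μ, ν = μ + 1 := ⟨ν - 1, by omega⟩
  rw [show 2 * (μ + 1) - 1 = μ + (μ + 1) by omega]
  rcases Nat.lt_or_ge q 2 with hq | hq
  · interval_cases q <;> simp only [Nat.div_zero, Nat.div_one] <;> omega
  have hq0 : 0 < q := by omega
  -- each quotient becomes a sum of quotients of the summands plus carries that depend only on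
  -- the residues, so after forgetting the quotients the claim is linear in the residues
  simp only [Nat.add_div hq0, Nat.add_mod_eq_ite, Nat.mod_eq_of_lt hq, Nat.div_eq_of_lt hq]
  have := Nat.mod_lt m hq0
  have := Nat.mod_lt j hq0
  have := Nat.mod_lt μ hq0
  generalize μ / q = a
  generalize m / q = b
  generalize j / q = c
  split_ifs <;> omega

lemma factorial_mul_factorial_mul_dvd {ν : ℕ} (hν : 0 < ν) (m j : ℕ) :
    (m + ν)! * (j + ν)! * (m ! * j !) ∣ (2 * ν - 1)! * ((m + j)! * (m + j + ν)!) := by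
  have := prod_map_factorial_dvd (s := {m + ν, j + ν, m, j}) (t := {2 * ν - 1, m + j, m + j + ν})
    fun q _ => by simpa [add_assoc] using div_add_div_add_div_add_div_le_s1 hν q m j
  simpa [mul_assoc] using this

lemma factorial_sub_add_mul_factorial_add_dvd {ν k j : ℕ} (hν : 0 < ν) (hjk : j ≤ k) :
    (k - j + ν)! * (j + ν)! ∣ (2 * ν - 1)! * (k.choose j * (k + ν)!) := by
  obtain ⟨m, rfl⟩ : ∃ m, k = m + j := ⟨k - j, by omega⟩
  have h := factorial_mul_factorial_mul_dvd hν m j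
  rw [← add_choose_mul_factorial_mul_factorial m j] at h
  rw [Nat.add_sub_cancel, ← Nat.mul_dvd_mul_iff_right (by positivity : 0 < m ! * j !)]
  convert h using 1; ring

lemma dvd_of_isLeast_of_mod_mem {P : ℕ → Prop} (hP : ∀ a b, P a → P b → P (a % b)) {r a : ℕ}
    (hr : IsLeast {r | 0 < r ∧ P r} r) (ha : P a) : r ∣ a := by
  refine Nat.dvd_of_mod_eq_zero (Nat.eq_zero_of_not_pos fun hpos => ?_)
  exact absurd (hr.2 ⟨hpos, hP a r ha hr.1.2⟩) (not_le.2 (Nat.mod_lt a hr.1.1))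

end Nat

lemma exists_intCast_eq_mod_mul {x : ℚ} {a r : ℕ} (ha : ∃ z : ℤ, (a : ℚ) * x = z)
    (hr : ∃ z : ℤ, (r : ℚ) * x = z) : ∃ z : ℤ, ((a % r : ℕ) : ℚ) * x = z := by
  obtain ⟨za, hza⟩ := ha
  obtain ⟨zr, hzr⟩ := hr
  refine ⟨za - (a / r : ℕ) * zr, ?_⟩
  have hdiv : ((a % r : ℕ) : ℚ) + r * (a / r : ℕ) = a := by exact_mod_cast Nat.mod_add_div a r
  simp only [Int.cast_sub, Int.cast_mul, Int.cast_natCast]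
  linear_combination x * hdiv + hza - ((a / r : ℕ) : ℚ) * hzr

lemma exists_intCast_eq_factorial_div_factorial_mul_A {ν k j : ℕ} (hν : 0 < ν) (hjk : j ≤ k) :
    ∃ z : ℤ, (((2 * ν - 1)! / ν ! : ℕ) : ℚ) * A ν k j = z := by
  obtain ⟨t, ht⟩ := factorial_sub_add_mul_factorial_add_dvd hν hjk
  refine ⟨t, ?_⟩
  have hM : (((2 * ν - 1)! / ν ! : ℕ) : ℚ) * ν ! = (2 * ν - 1)! := by
    exact_mod_cast Nat.div_mul_cancel (factorial_dvd_factorial (by omega))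
  have ht' : ((2 * ν - 1)! : ℚ) * (k.choose j * (k + ν)!) = (k - j + ν)! * (j + ν)! * t := by
    exact_mod_cast ht
  rw [A, mul_div_assoc', div_eq_iff (by positivity)]
  linear_combination (k.choose j * (k + ν)! : ℚ) * hM + ht'

/-- For every `ν ≥ 1`, the least positive integer `r` such that `r·A_{k,j}(ν)` is an
integer for all `j ≤ k` exists and divides `(2ν−1)!/ν!`. -/
theorem stmt1 (ν : ℕ) (hν : 1 ≤ ν) :
    ∃ r : ℕ,
      IsLeast {r : ℕ | 0 < r ∧ ∀ k j : ℕ, j ≤ k → ∃ z : ℤ, (r : ℚ) * A ν k j = (z : ℚ)} r ∧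
      r ∣ (2 * ν - 1).factorial / ν.factorial := by
  set S := {r : ℕ | 0 < r ∧ ∀ k j : ℕ, j ≤ k → ∃ z : ℤ, (r : ℚ) * A ν k j = (z : ℚ)}
  have hM : (2 * ν - 1)! / ν ! ∈ S :=
    ⟨Nat.div_pos (factorial_le (by omega)) (factorial_pos ν),
      fun k j hjk => exists_intCast_eq_factorial_div_factorial_mul_A hν hjk⟩
  have hleast : IsLeast S (sInf S) := ⟨Nat.sInf_mem ⟨_, hM⟩, fun _ => Nat.sInf_le⟩
  refine ⟨sInf S, hleast, Nat.dvd_of_isLeast_of_mod_mem ?_ hleast hM.2⟩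
  exact fun a b ha hb k j hjk => exists_intCast_eq_mod_mul (ha k j hjk) (hb k j hjk)
end

section
/- For every integer ν ≥ 1 and every positive integer r such that r · A_{k,j}(ν) is an integer for all nonnegative integers j ≤ k, the central-type binomial coefficient C(2ν−1, ν) divides r. In particular C(2ν−1,ν) divides r_ν. -/
/-!
Fix `m`. Since `A_{k,m}(ν) · C(ν+m, m) = C(k, m) · C(k+ν, m)` and
`C(2m, m+t) · C(m+t, m) = C(2m, m) · C(m, t)`, the integer combination
`∑_{t ≤ m} (-1)^(m-t) C(2m, m+t) · r A_{m+t,m}(ν)` equals `r C(2m, m) / C(ν+m, m)` times the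
`m`-th forward difference of `t ↦ C(t+m+ν, m)`, which is `1`. Hence `C(ν+m, m) ∣ r C(2m, m)`
for every `m`, and it remains to choose `m` prime by prime using Kummer's theorem. For odd `p`,
`2m + 1 = p^N > 2ν` makes every base-`p` digit of `m` equal to `(p-1)/2`: then `C(2m, m)` is
prime to `p` and every carry of `ν + (ν-1)` is a carry of `ν + m`. For `p = 2`, `ν + m = 2^N`
gives `v₂ C(ν+m, m) = s(ν) + s(m) - 1 = v₂ C(2ν-1, ν) + v₂ C(2m, m)`, with `s` the binary
digit sum.
-/

open Finset Nat fwdDiff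

lemma A_mul_choose {ν k m : ℕ} (hmk : m ≤ k) :
    A ν k m * (ν + m).choose m = k.choose m * (k + ν).choose m := by
  have hsub : k + ν - m = k - m + ν := by omega
  rw [A, cast_choose ℚ (le_add_left m ν), cast_choose ℚ (hmk.trans (le_add_right k ν)), hsub,
    Nat.add_sub_cancel, add_comm ν m]
  field_simp

lemma sum_neg_one_pow_mul_choose_mul_choose_add (m c : ℕ) :
    ∑ t ∈ range (m + 1), (-1 : ℤ) ^ (m - t) * m.choose t * (t + c).choose m = 1 := by
  have hΔ : Δ_[1] ^[m] (fun x ↦ x.choose m : ℕ → ℤ) = fun _ ↦ 1 := by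
    simpa using fwdDiff_iter_choose 0 m
  have h := fwdDiff_iter_comp_add 1 (fun x ↦ (x.choose m : ℤ)) c m 0
  rw [fwdDiff_iter_eq_sum_shift, hΔ] at h
  simpa [mul_assoc] using h

lemma sum_neg_one_pow_mul_choose_mul_choose_mul_choose (ν m : ℕ) :
    ∑ t ∈ range (m + 1),
      (-1 : ℤ) ^ (m - t) * (2 * m).choose (m + t) * ((m + t).choose m * (m + t + ν).choose m) =
      m.centralBinom := by
  have hsplit (t : ℕ) (ht : t ≤ m) :
      (2 * m).choose (m + t) * (m + t).choose m = m.centralBinom * m.choose t := by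
    rw [choose_mul (le_add_right m t), centralBinom_eq_two_mul_choose]
    congr 2 <;> omega
  calc _ = ∑ t ∈ range (m + 1), (m.centralBinom : ℤ) *
        ((-1 : ℤ) ^ (m - t) * m.choose t * (t + (m + ν)).choose m) := by
        refine sum_congr rfl fun t ht ↦ ?_
        have := congrArg (Nat.cast : ℕ → ℤ) (hsplit t (mem_range_succ_iff.1 ht))
        push_cast at this
        rw [show t + (m + ν) = m + t + ν by omega]
        linear_combination (-1 : ℤ) ^ (m - t) * ((m + t + ν).choose m : ℤ) * this
    _ = m.centralBinom := by
        rw [← mul_sum, sum_neg_one_pow_mul_choose_mul_choose_add, mul_one]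

lemma choose_add_dvd_mul_centralBinom {ν r : ℕ}
    (h : ∀ k j : ℕ, j ≤ k → ∃ z : ℤ, (r : ℚ) * A ν k j = z) (m : ℕ) :
    (ν + m).choose m ∣ r * m.centralBinom := by
  choose w hw using fun t ↦ h (m + t) m (le_add_right m t)
  suffices (r * m.centralBinom : ℤ) = (ν + m).choose m *
      ∑ t ∈ range (m + 1), (-1 : ℤ) ^ (m - t) * (2 * m).choose (m + t) * w t by
    exact_mod_cast Dvd.intro _ this.symm
  rw [← sum_neg_one_pow_mul_choose_mul_choose_mul_choose ν m]
  qify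
  simp only [mul_sum]
  refine sum_congr rfl fun t _ ↦ ?_
  rw [← hw t, ← A_mul_choose (le_add_right m t)]
  ring

lemma two_mul_mod_add_one_eq_of_dvd {q m : ℕ} (h : q ∣ 2 * m + 1) : 2 * (m % q) + 1 = q := by
  have hq : 0 < q := pos_of_dvd_of_pos h (succ_pos _)
  have hdvd : q ∣ 2 * (m % q) + 1 := by
    have h' : q ∣ 2 * (m % q) + 1 + q * (2 * (m / q)) := by
      convert h using 1; linarith [mod_add_div m q]
    exact (Nat.dvd_add_right (dvd_mul_right q _)).1 (by rwa [add_comm] at h')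
  obtain ⟨c, hc⟩ := hdvd
  have hlt := mod_lt m hq
  rcases c with _ | _ | c
  · omega
  · omega
  · nlinarith

lemma lt_two_mul_mod_of_le_mod_add_pred_mod {q n : ℕ} (hn : n ≠ 0)
    (h : q ≤ n % q + (n - 1) % q) : q < 2 * (n % q) := by
  obtain ⟨k, rfl⟩ := exists_eq_add_one_of_ne_zero hn
  rw [Nat.add_sub_cancel] at h
  rcases lt_trichotomy q 1 with hq | rfl | hq
  · simp [lt_one_iff.1 hq]
  · simp [mod_one] at h
  have hk := mod_lt k (zero_lt_one.trans hq)
  have h1 : 1 % q = 1 := one_mod_eq_one.2 hq.ne'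
  by_cases hwrap : k % q + 1 < q
  · rw [add_mod_of_add_mod_lt (by rwa [h1]), h1] at h ⊢
    omega
  · rw [add_mod_eq_ite, h1, if_pos (by omega)] at h
    omega

lemma digits_sum_pos {b n : ℕ} (hn : n ≠ 0) : 0 < (b.digits n).sum :=
  (pos_of_ne_zero (getLast_digit_ne_zero b hn)).trans_le (List.le_sum_of_mem (List.getLast_mem _))

lemma digits_two_sum_two_mul (n : ℕ) : (digits 2 (2 * n)).sum = (digits 2 n).sum := by
  rcases Nat.eq_zero_or_pos n with rfl | hn
  · simp
  · simpa using congrArg List.sum (digits_base_pow_mul (b := 2) (k := 1) one_lt_two hn)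

lemma digits_two_sum_two_mul_add_one (n : ℕ) :
    (digits 2 (2 * n + 1)).sum = (digits 2 n).sum + 1 := by
  rw [add_comm, digits_add 2 one_lt_two 1 n one_lt_two (Or.inl one_ne_zero), List.sum_cons,
    add_comm]

lemma digits_two_sum_two_pow (N : ℕ) : (digits 2 (2 ^ N)).sum = 1 := by
  simpa using congrArg List.sum (digits_base_pow_mul (b := 2) (k := N) one_lt_two one_pos)

lemma log_lt_succ_of_le_pow {b n N : ℕ} (hb : 1 < b) (h : n ≤ b ^ N) : log b n < N + 1 :=
  lt_succ_of_le ((log_mono_right h).trans_eq (log_pow hb N))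

section OddPrime

variable {p : ℕ} [hp : Fact p.Prime]

lemma padicValNat_centralBinom_eq_zero {m N : ℕ} (hm : p ^ N = 2 * m + 1) :
    padicValNat p m.centralBinom = 0 := by
  rw [centralBinom_eq_two_mul_choose, two_mul,
    padicValNat_choose' (b := N + 1) (log_lt_succ_of_le_pow hp.out.one_lt (by omega))]
  simp only [Finset.card_eq_zero, filter_eq_empty_iff, mem_Ico, not_le]
  rintro i ⟨-, hi⟩
  have := two_mul_mod_add_one_eq_of_dvd (hm ▸ pow_dvd_pow p (le_of_lt_succ hi))
  omega

lemma padicValNat_choose_two_mul_sub_one_le {ν m N : ℕ} (hν : 0 < ν) (hνm : ν ≤ m)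
    (hm : p ^ N = 2 * m + 1) :
    padicValNat p ((2 * ν - 1).choose ν) ≤ padicValNat p ((ν + m).choose m) := by
  rw [show 2 * ν - 1 = ν - 1 + ν by omega,
    padicValNat_choose' (b := N + 1) (log_lt_succ_of_le_pow hp.out.one_lt (by omega)),
    padicValNat_choose' (b := N + 1) (log_lt_succ_of_le_pow hp.out.one_lt (by omega))]
  refine card_le_card fun i ↦ ?_
  simp only [mem_filter, mem_Ico]
  rintro ⟨hi, hcarry⟩
  have := two_mul_mod_add_one_eq_of_dvd (hm ▸ pow_dvd_pow p (le_of_lt_succ hi.2))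
  have := lt_two_mul_mod_of_le_mod_add_pred_mod hν.ne' hcarry
  exact ⟨hi, by omega⟩

end OddPrime

lemma padicValNat_two_choose_add (n k : ℕ) :
    padicValNat 2 ((n + k).choose k) =
      (digits 2 k).sum + (digits 2 n).sum - (digits 2 (n + k)).sum := by
  simpa using sub_one_mul_padicValNat_choose_eq_sub_sum_digits' (p := 2) (n := n) (k := k)

lemma padicValNat_two_choose_two_mul_sub_one_add_le {ν m N : ℕ} (hν : 0 < ν)
    (hm : ν + m = 2 ^ N) :
    padicValNat 2 ((2 * ν - 1).choose ν) + padicValNat 2 m.centralBinom ≤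
      padicValNat 2 ((ν + m).choose m) := by
  rw [show 2 * ν - 1 = ν - 1 + ν by omega, centralBinom_eq_two_mul_choose, two_mul,
    padicValNat_two_choose_add, padicValNat_two_choose_add, padicValNat_two_choose_add,
    hm, digits_two_sum_two_pow, ← two_mul m, digits_two_sum_two_mul,
    show ν - 1 + ν = 2 * (ν - 1) + 1 by omega, digits_two_sum_two_mul_add_one]
  have := digits_sum_pos (b := 2) hν.ne'
  omega

lemma exists_padicValNat_choose_two_mul_sub_one_add_le (p : ℕ) [hp : Fact p.Prime] {ν : ℕ}
    (hν : 0 < ν) :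
    ∃ m, padicValNat p ((2 * ν - 1).choose ν) + padicValNat p m.centralBinom ≤
      padicValNat p ((ν + m).choose m) := by
  rcases hp.out.eq_two_or_odd' with rfl | hodd
  · refine ⟨2 ^ (log 2 ν + 1) - ν,
      padicValNat_two_choose_two_mul_sub_one_add_le (N := log 2 ν + 1) hν ?_⟩
    have : ν < 2 ^ (log 2 ν + 1) := lt_pow_succ_log_self one_lt_two ν
    omega
  · obtain ⟨m, hm⟩ := hodd.pow (n := log p (2 * ν) + 1)
    have : 2 * ν < p ^ (log p (2 * ν) + 1) := lt_pow_succ_log_self hp.out.one_lt (2 * ν)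
    refine ⟨m, ?_⟩
    rw [padicValNat_centralBinom_eq_zero hm, add_zero]
    exact padicValNat_choose_two_mul_sub_one_le hν (by omega) hm

lemma padicValNat_le_add_of_dvd_mul {p a b c : ℕ} [Fact p.Prime] (hb : b ≠ 0) (hc : c ≠ 0)
    (h : a ∣ b * c) : padicValNat p a ≤ padicValNat p b + padicValNat p c := by
  rw [← padicValNat.mul hb hc]
  exact (padicValNat_dvd_iff_le (mul_ne_zero hb hc)).1 (pow_padicValNat_dvd.trans h)

/-- For every `ν ≥ 1` and every positive integer `r` such that `r·A_{k,j}(ν)` is an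
integer for all `j ≤ k`, the binomial coefficient `C(2ν−1, ν)` divides `r`. -/
theorem stmt2 (ν : ℕ) (hν : 1 ≤ ν) (r : ℕ) (hr : 0 < r)
    (h : ∀ k j : ℕ, j ≤ k → ∃ z : ℤ, (r : ℚ) * A ν k j = (z : ℚ)) :
    Nat.choose (2 * ν - 1) ν ∣ r := by
  rw [← factorization_prime_le_iff_dvd (choose_pos (by omega)).ne' hr.ne']
  intro p hp
  have := Fact.mk hp
  obtain ⟨m, hm⟩ := exists_padicValNat_choose_two_mul_sub_one_add_le p hν
  have := padicValNat_le_add_of_dvd_mul (p := p) hr.ne' (centralBinom_ne_zero m)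
    (choose_add_dvd_mul_centralBinom h m)
  rw [factorization_def _ hp, factorization_def _ hp]
  omega
end

section
/- For integers 1 ≤ ν ≤ j, the greatest common divisor of the two products (j−ν+1)(j−ν+2)⋯j and (j+1)(j+2)⋯(j+ν) (each a product of ν consecutive integers) divides (2ν−1)!. -/
/-!
Write `j = m + ν`. By Legendre, the `p`-adic valuation of `(m + 1) ⋯ (m + ν)` is
`∑ᵢ (⌊(m + ν)/pⁱ⌋ - ⌊m/pⁱ⌋)`, the `i`-th term counting the multiples of `pⁱ` in `(m, m + ν]`.
If `pⁱ < 2ν` this count is at most `⌊(2ν - 1)/pⁱ⌋`. The powers `pⁱ ≥ 2ν` contribute to at most one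
of the two products: a multiple of `pⁱ` in `(m, m + ν]` and a multiple of `pⁱ'` in
`(m + ν, m + 2ν]` would be two distinct multiples of `p ^ min i i' ≥ 2ν` in an interval of
length `2ν`. Hence one of the two valuations is at most `∑ᵢ ⌊(2ν - 1)/pⁱ⌋ = v_p((2ν - 1)!)`.
-/

open Finset

namespace Nat

theorem prod_Icc_id_eq_ascFactorial (n k : ℕ) :
    ∏ i ∈ Icc (n + 1) (n + k), i = (n + 1).ascFactorial k := by
  rw [ascFactorial_eq_prod_range, ← Ico_add_one_right_eq_Icc, prod_Ico_eq_prod_range,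
    show n + k + 1 - (n + 1) = k by omega]

theorem padicValNat_ascFactorial (p : ℕ) [Fact p.Prime] {n k b : ℕ} (hb : log p (n + k) < b) :
    padicValNat p ((n + 1).ascFactorial k) = ∑ i ∈ Ico 1 b, ((n + k) / p ^ i - n / p ^ i) := by
  have hfac := factorial_mul_ascFactorial n k
  apply_fun padicValNat p at hfac
  rw [padicValNat.mul (factorial_ne_zero n) (ascFactorial_pos n k).ne',
    padicValNat_factorial hb, padicValNat_factorial ((log_mono_right (by omega)).trans_lt hb)]
    at hfac
  rw [sum_tsub_distrib _ fun i _ => Nat.div_le_div_right (by omega)]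
  omega

theorem div_lt_div_of_dvd {q q' a b : ℕ} (hq : q ∣ q') (h : a / q' < b / q') :
    a / q < b / q := by
  obtain ⟨r, rfl⟩ := hq
  rw [← Nat.div_div_eq_div_mul, ← Nat.div_div_eq_div_mul] at h
  by_contra! hle
  exact (Nat.div_le_div_right hle).not_gt h

theorem div_le_div_add_one_of_le_add {a b q : ℕ} (h : b ≤ a + q) : b / q ≤ a / q + 1 := by
  rcases q.eq_zero_or_pos with rfl | hq
  · simp
  · exact (Nat.div_le_div_right h).trans (add_div_right a hq).le

theorem not_div_lt_div_lt_div {m ν q : ℕ} (hq : 2 * ν ≤ q)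
    (h₁ : m / q < (m + ν) / q) (h₂ : (m + ν) / q < (m + ν + ν) / q) : False := by
  have := div_le_div_add_one_of_le_add (a := m) (b := m + ν + ν) (q := q) (by omega)
  omega

theorem add_div_sub_div_le_of_lt_two_mul {n ν q : ℕ} (hq : q < 2 * ν) :
    (n + ν) / q - n / q ≤ (2 * ν - 1) / q := by
  rcases q.eq_zero_or_pos with rfl | hq₀
  · simp
  rw [Nat.le_div_iff_mul_le hq₀]
  set k := (n + ν) / q - n / q
  have hspan : k * q + 1 ≤ ν + q := by
    have := Nat.div_mul_le_self (n + ν) q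
    have := Nat.lt_div_mul_add (a := n) hq₀
    rw [Nat.sub_mul]
    omega
  rcases le_or_gt k 1 with hk | hk
  · have := Nat.mul_le_mul_right q hk
    omega
  · have : q ≤ (k - 1) * q := Nat.le_mul_of_pos_left q (by omega)
    rw [Nat.sub_one_mul] at this
    omega

theorem add_div_sub_div_le {n ν q : ℕ} (h : 2 * ν ≤ q → (n + ν) / q ≤ n / q) :
    (n + ν) / q - n / q ≤ (2 * ν - 1) / q := by
  rcases lt_or_ge q (2 * ν) with hq | hq
  · exact add_div_sub_div_le_of_lt_two_mul hq
  · rw [Nat.sub_eq_zero_of_le (h hq)]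
    exact Nat.zero_le _

theorem min_padicValNat_ascFactorial_le (p : ℕ) [Fact p.Prime] (m ν : ℕ) :
    min (padicValNat p ((m + 1).ascFactorial ν)) (padicValNat p ((m + ν + 1).ascFactorial ν)) ≤
      padicValNat p (2 * ν - 1)! := by
  have hlog : ∀ n ≤ m + ν + ν, log p n < m + ν + ν + 1 := fun n hn =>
    (log_le_self p n).trans_lt (by omega)
  rw [padicValNat_ascFactorial p (hlog _ (by omega)), padicValNat_ascFactorial p (hlog _ le_rfl),
    padicValNat_factorial (hlog _ (by omega))]
  by_cases hlow : ∃ i ∈ Ico 1 (m + ν + ν + 1), 2 * ν ≤ p ^ i ∧ m / p ^ i < (m + ν) / p ^ i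
  · obtain ⟨i₁, -, hbig₁, hdiv₁⟩ := hlow
    refine (min_le_right _ _).trans (sum_le_sum fun i _ => add_div_sub_div_le fun hbig => ?_)
    by_contra! hdiv
    refine not_div_lt_div_lt_div (q := p ^ min i₁ i) ?_
      (div_lt_div_of_dvd (pow_dvd_pow p (min_le_left _ _)) hdiv₁)
      (div_lt_div_of_dvd (pow_dvd_pow p (min_le_right _ _)) hdiv)
    rcases min_choice i₁ i with h | h <;> rwa [h]
  · push Not at hlow
    exact (min_le_left _ _).trans (sum_le_sum fun i hi => add_div_sub_div_le (hlow i hi))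

theorem gcd_ascFactorial_dvd_factorial (m ν : ℕ) :
    gcd ((m + 1).ascFactorial ν) ((m + ν + 1).ascFactorial ν) ∣ (2 * ν - 1)! := by
  refine (dvd_iff_prime_pow_dvd_dvd _ _).2 fun p k hp hdvd => ?_
  have := Fact.mk hp
  rw [dvd_gcd_iff, padicValNat_dvd_iff_le (ascFactorial_pos _ _).ne',
    padicValNat_dvd_iff_le (ascFactorial_pos _ _).ne'] at hdvd
  rw [padicValNat_dvd_iff_le (factorial_ne_zero _)]
  exact (le_min hdvd.1 hdvd.2).trans (min_padicValNat_ascFactorial_le p m ν)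

end Nat

theorem stmt3_general (ν j : ℕ) (hj : ν ≤ j) :
    Nat.gcd (∏ i ∈ Finset.Icc (j - ν + 1) j, i) (∏ i ∈ Finset.Icc (j + 1) (j + ν), i) ∣
      (2 * ν - 1).factorial := by
  obtain ⟨m, rfl⟩ := Nat.exists_eq_add_of_le' hj
  rw [Nat.add_sub_cancel, Nat.prod_Icc_id_eq_ascFactorial, Nat.prod_Icc_id_eq_ascFactorial]
  exact Nat.gcd_ascFactorial_dvd_factorial m ν

/-- For integers `1 ≤ ν ≤ j`, the gcd of the products `(j−ν+1)⋯j` and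
`(j+1)⋯(j+ν)` divides `(2ν−1)!`. -/
theorem stmt3 (ν j : ℕ) (hν : 1 ≤ ν) (hj : ν ≤ j) :
    Nat.gcd (∏ i ∈ Finset.Icc (j - ν + 1) j, i) (∏ i ∈ Finset.Icc (j + 1) (j + ν), i) ∣
      (2 * ν - 1).factorial :=
  stmt3_general ν j hj
end

section
/- Let ν ≥ 1, let p be a prime, and let α, r be positive integers with p^α dividing C(2ν−1, ν), p^r ≥ p^α, and p^r > ν. Then the denominator of the rational number A_{p^r−1, ν−1}(ν) (in lowest terms) is divisible by p^α; equivalently, the p-adic valuation of A_{p^r−1, ν−1}(ν) is at most −α. -/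
private lemma pvn_eq {p : ℕ} (hp : p.Prime) {n v : ℕ} (hn : n ≠ 0)
    (h1 : p ^ v ∣ n) (h2 : ¬ p ^ (v + 1) ∣ n) : padicValNat p n = v := by
  have h1' := (Nat.Prime.pow_dvd_iff_le_factorization hp hn).1 h1
  have h2' : ¬ (v + 1 ≤ n.factorization p) :=
    fun h => h2 ((Nat.Prime.pow_dvd_iff_le_factorization hp hn).2 h)
  rw [Nat.factorization_def n hp] at h1' h2'
  omega

private lemma val_add {p : ℕ} (hp : p.Prime) {r i : ℕ} (h0 : 0 < i) (hi : i < p ^ r) :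
    padicValNat p (p ^ r + i) = padicValNat p i := by
  haveI : Fact p.Prime := ⟨hp⟩
  set v := padicValNat p i with hv
  have hdvd : p ^ v ∣ i := pow_padicValNat_dvd
  have hvr : v < r := by
    by_contra h
    have : p ^ r ≤ p ^ v := Nat.pow_le_pow_right hp.pos (by omega)
    exact absurd (Nat.le_of_dvd h0 hdvd) (by omega)
  have hnd : ¬ p ^ (v + 1) ∣ i :=
    pow_succ_padicValNat_not_dvd h0.ne'
  refine pvn_eq hp (by omega) (dvd_add (dvd_trans (pow_dvd_pow p (by omega)) dvd_rfl) hdvd) ?_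
  intro h
  have hpr : p ^ (v + 1) ∣ p ^ r := pow_dvd_pow p (by omega)
  exact hnd ((Nat.dvd_add_right hpr).1 h)

private lemma val_sub {p : ℕ} (hp : p.Prime) {r i : ℕ} (h0 : 0 < i) (hi : i < p ^ r) :
    padicValNat p (p ^ r - i) = padicValNat p i := by
  haveI : Fact p.Prime := ⟨hp⟩
  set v := padicValNat p i with hv
  have hdvd : p ^ v ∣ i := pow_padicValNat_dvd
  have hvr : v < r := by
    by_contra h
    have : p ^ r ≤ p ^ v := Nat.pow_le_pow_right hp.pos (by omega)
    exact absurd (Nat.le_of_dvd h0 hdvd) (by omega)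
  have hnd : ¬ p ^ (v + 1) ∣ i :=
    pow_succ_padicValNat_not_dvd h0.ne'
  have hprv : p ^ v ∣ p ^ r := pow_dvd_pow p (by omega)
  refine pvn_eq hp (by omega) (Nat.dvd_sub hprv hdvd) ?_
  intro h
  have hpr : p ^ (v + 1) ∣ p ^ r := pow_dvd_pow p (by omega)
  have : p ^ (v + 1) ∣ p ^ r - (p ^ r - i) := Nat.dvd_sub hpr h
  rw [Nat.sub_sub_self (le_of_lt hi)] at this
  exact hnd this

/-- `v_p((p^r + m)!) = v_p((p^r)!) + v_p(m!)` for `m < p^r`. -/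
private lemma fact_add {p : ℕ} (hp : p.Prime) {r : ℕ} :
    ∀ m, m < p ^ r → padicValNat p ((p ^ r + m).factorial) =
      padicValNat p ((p ^ r).factorial) + padicValNat p m.factorial := by
  haveI : Fact p.Prime := ⟨hp⟩
  intro m
  induction m with
  | zero => simp
  | succ n ih =>
    intro h
    have hn := ih (by omega)
    have h1 : (p ^ r + (n + 1)).factorial = (p ^ r + n).factorial * (p ^ r + (n + 1)) := by
      rw [show p ^ r + (n + 1) = (p ^ r + n) + 1 by ring, Nat.factorial_succ]; ring
    have h2 : (n + 1).factorial = n.factorial * (n + 1) := by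
      rw [Nat.factorial_succ]; ring
    rw [h1, h2, padicValNat.mul (Nat.factorial_ne_zero _) (by omega),
      padicValNat.mul (Nat.factorial_ne_zero _) (by omega),
      val_add hp (by omega) h, hn]
    ring

/-- `v_p((p^r − 1)!) = v_p((p^r − 1 − m)!) + v_p(m!)` for `m < p^r`. -/
private lemma fact_sub {p : ℕ} (hp : p.Prime) {r : ℕ} :
    ∀ m, m < p ^ r → padicValNat p ((p ^ r - 1).factorial) =
      padicValNat p ((p ^ r - 1 - m).factorial) + padicValNat p m.factorial := by
  haveI : Fact p.Prime := ⟨hp⟩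
  intro m
  induction m with
  | zero => simp
  | succ n ih =>
    intro h
    have hpr : 1 < p ^ r := by
      calc 1 ≤ n + 1 := by omega
      _ < p ^ r := h
    have hn := ih (by omega)
    have hkey : p ^ r - 1 - n = (p ^ r - 1 - (n + 1)) + (p ^ r - (n + 1)) - (p ^ r - 1 - (n + 1)) := by
      omega
    have h1 : (p ^ r - 1 - n).factorial = (p ^ r - 1 - (n + 1)).factorial * (p ^ r - (n + 1)) := by
      rw [show p ^ r - 1 - n = (p ^ r - 1 - (n + 1)) + 1 by omega, Nat.factorial_succ,
        show p ^ r - 1 - (n + 1) + 1 = p ^ r - (n + 1) by omega]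
      ring
    have h2 : (n + 1).factorial = n.factorial * (n + 1) := by
      rw [Nat.factorial_succ]; ring
    rw [hn, h1, h2, padicValNat.mul (Nat.factorial_ne_zero _) (by omega),
      padicValNat.mul (Nat.factorial_ne_zero _) (by omega),
      val_sub hp (by omega) h]
    ring

/-- If `p^α ∣ C(2ν−1,ν)`, `p^r ≥ p^α` and `p^r > ν`, then the denominator (in lowest
terms) of `A_{p^r−1, ν−1}(ν)` is divisible by `p^α`. -/
theorem stmt4 (ν : ℕ) (hν : 1 ≤ ν) (p : ℕ) (hp : p.Prime) (α r : ℕ) (hα : 0 < α)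
    (hr : 0 < r) (hdvd : p ^ α ∣ Nat.choose (2 * ν - 1) ν) (hle : p ^ α ≤ p ^ r)
    (hgt : ν < p ^ r) :
    p ^ α ∣ (A ν (p ^ r - 1) (ν - 1)).den := by
  haveI : Fact p.Prime := ⟨hp⟩
  set k := p ^ r with hk
  -- basic arithmetic facts
  have hk1 : 1 ≤ k := by omega
  have e1 : k - 1 - (ν - 1) + ν = k := by omega
  have e2 : ν - 1 + ν = 2 * ν - 1 := by omega
  have e3 : k - 1 + ν = k + (ν - 1) := by omega
  -- nonzero facts
  have hC1 : 0 < Nat.choose (k - 1) (ν - 1) := Nat.choose_pos (by omega)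
  have hC2 : 0 < Nat.choose (2 * ν - 1) ν := Nat.choose_pos (by omega)
  have nzf : ∀ n : ℕ, ((n.factorial : ℚ)) ≠ 0 := fun n => Nat.cast_ne_zero.2 (Nat.factorial_ne_zero n)
  have nz1 : ((Nat.choose (k - 1) (ν - 1) : ℚ)) ≠ 0 := Nat.cast_ne_zero.2 hC1.ne'
  -- valuation identities for factorial ratios
  have hfa := fact_add hp (ν - 1) (show ν - 1 < p ^ r by omega)
  have hfs := fact_sub hp (ν - 1) (show ν - 1 < p ^ r by omega)
  rw [show p ^ r + (ν - 1) = k - 1 + ν by omega] at hfa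
  rw [show p ^ r - 1 - (ν - 1) = k - 1 - (ν - 1) by omega,
    show p ^ r - 1 = k - 1 by omega] at hfs
  rw [← hk] at hfa
  -- choose identities
  have hc1 : Nat.choose (2 * ν - 1) ν * ν.factorial * (ν - 1).factorial
      = (2 * ν - 1).factorial := by
    have h := Nat.choose_mul_factorial_mul_factorial (show ν ≤ 2 * ν - 1 by omega)
    rwa [show 2 * ν - 1 - ν = ν - 1 by omega] at h
  have hc2 : Nat.choose (k - 1) (ν - 1) * (ν - 1).factorial * (k - 1 - (ν - 1)).factorial
      = (k - 1).factorial :=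
    Nat.choose_mul_factorial_mul_factorial (by omega)
  have hv1 := congrArg (padicValNat p) hc1
  rw [padicValNat.mul (Nat.mul_ne_zero hC2.ne' (Nat.factorial_ne_zero _))
      (Nat.factorial_ne_zero _),
    padicValNat.mul hC2.ne' (Nat.factorial_ne_zero _)] at hv1
  have hv2 := congrArg (padicValNat p) hc2
  rw [padicValNat.mul (Nat.mul_ne_zero hC1.ne' (Nat.factorial_ne_zero _))
      (Nat.factorial_ne_zero _),
    padicValNat.mul hC1.ne' (Nat.factorial_ne_zero _)] at hv2
  -- compute the p-adic valuation of A
  have hAval : padicValRat p (A ν (k - 1) (ν - 1))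
      = ((padicValNat p (Nat.choose (k - 1) (ν - 1)) : ℤ)
          + padicValNat p ((k - 1 + ν).factorial) + padicValNat p ν.factorial)
        - ((padicValNat p (k.factorial) : ℤ) + padicValNat p ((2 * ν - 1).factorial)) := by
    unfold A
    rw [e1, e2]
    rw [padicValRat.div (mul_ne_zero (mul_ne_zero nz1 (nzf _)) (nzf _))
        (mul_ne_zero (nzf _) (nzf _)),
      padicValRat.mul (mul_ne_zero nz1 (nzf _)) (nzf _),
      padicValRat.mul nz1 (nzf _),
      padicValRat.mul (nzf _) (nzf _)]
    simp only [padicValRat.of_nat]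
  have hva : padicValRat p (A ν (k - 1) (ν - 1))
      = -(padicValNat p (Nat.choose (2 * ν - 1) ν) : ℤ) := by
    rw [hAval]; omega
  -- from divisibility, α ≤ v_p(C(2ν−1,ν))
  have hαb : α ≤ padicValNat p (Nat.choose (2 * ν - 1) ν) := by
    have h := (Nat.Prime.pow_dvd_iff_le_factorization hp hC2.ne').1 hdvd
    rwa [Nat.factorization_def _ hp] at h
  -- conclude about the denominator
  have hdef := padicValRat_def p (A ν (k - 1) (ν - 1))
  have hden : α ≤ padicValNat p (A ν (k - 1) (ν - 1)).den := by omega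
  have hdnz : (A ν (k - 1) (ν - 1)).den ≠ 0 := (A ν (k - 1) (ν - 1)).den_nz
  rw [show p ^ r - 1 = k - 1 by rfl]
  exact (Nat.Prime.pow_dvd_iff_le_factorization hp hdnz).2
    (by rwa [Nat.factorization_def _ hp])
end

section
/- For ν = 3, the least positive integer r such that r · A_{k,j}(3) is an integer for all nonnegative integers j ≤ k equals 10 = C(5,3). Equivalently: 10 · A_{k,j}(3) ∈ ℤ for all j ≤ k, and for every positive integer r with r · A_{k,j}(3) ∈ ℤ for all j ≤ k, 10 divides r. -/
theorem Nat.cast_choose_succ_right (K : Type*) [DivisionRing K] [CharZero K] (n m : ℕ) :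
    (n.choose (m + 1) : K) = n.choose m * (n - m) / (m + 1) := by
  rw [eq_div_iff (by exact_mod_cast m.succ_ne_zero)]
  rcases le_or_gt m n with hmn | hnm
  · rw [← Nat.cast_sub hmn]
    exact_mod_cast Nat.choose_succ_right_eq n m
  · simp [Nat.choose_eq_zero_of_lt hnm, Nat.choose_eq_zero_of_lt (hnm.trans m.lt_succ_self)]

theorem A_three_eq_choose_mul_choose (k j : ℕ) (hjk : j ≤ k) :
    A 3 k j = 6 * k.choose j * (k + 3).choose j / ((j + 1) * (j + 2) * (j + 3)) := by
  rw [A, Nat.cast_choose ℚ (by omega : j ≤ k + 3), show k + 3 - j = k - j + 3 by omega,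
    show j + 3 = j + 1 + 1 + 1 from rfl]
  simp only [Nat.factorial_succ]
  push_cast
  field_simp
  ring

theorem ten_mul_A_three_eq (k j : ℕ) (hjk : j ≤ k) :
    10 * A 3 k j =
      ((10 * k.choose j * (k + 3).choose (j + 3) - 15 * k.choose (j + 1) * (k + 3).choose (j + 2)
      + 15 * k.choose (j + 1) * (k + 3).choose (j + 3) + 6 * k.choose (j + 2) * (k + 3).choose (j + 1)
      - 18 * k.choose (j + 2) * (k + 3).choose (j + 2) + 6 * k.choose (j + 2) * (k + 3).choose (j + 3)
      - k.choose (j + 3) * (k + 3).choose j + 3 * k.choose (j + 3) * (k + 3).choose (j + 1)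
      - 6 * k.choose (j + 3) * (k + 3).choose (j + 2) : ℤ) : ℚ) := by
  push_cast
  simp only [A_three_eq_choose_mul_choose k j hjk, Nat.cast_choose_succ_right ℚ]
  push_cast
  field_simp
  ring

theorem A_three_two_one : A 3 2 1 = 5 / 2 := by norm_num [A, Nat.factorial, Nat.choose]

theorem A_three_four_two : A 3 4 2 = 63 / 5 := by norm_num [A, Nat.factorial, Nat.choose]

theorem Nat.dvd_of_cast_mul_div_eq_intCast {r p q : ℕ} (hq : q ≠ 0) (hpq : q.Coprime p) {z : ℤ}
    (h : (r : ℚ) * (p / q) = z) : q ∣ r := by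
  have hz : ((r * p : ℕ) : ℤ) = z * q := by
    rw [mul_div_assoc', div_eq_iff (by exact_mod_cast hq)] at h
    exact_mod_cast h
  exact hpq.dvd_of_dvd_mul_right (Int.natCast_dvd_natCast.mp ⟨z, by rw [hz, mul_comm]⟩)

/-- `10 · A_{k,j}(3)` is an integer for all `j ≤ k`, and any positive integer `r` with
`r · A_{k,j}(3)` an integer for all `j ≤ k` is divisible by `10`; i.e. `r₃ = 10 = C(5,3)`. -/
theorem stmt6 :
    (∀ k j : ℕ, j ≤ k → ∃ z : ℤ, (10 : ℚ) * A 3 k j = (z : ℚ)) ∧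
    (∀ r : ℕ, 0 < r → (∀ k j : ℕ, j ≤ k → ∃ z : ℤ, (r : ℚ) * A 3 k j = (z : ℚ)) →
      10 ∣ r) := by
  refine ⟨fun k j hjk => ⟨_, ten_mul_A_three_eq k j hjk⟩, ?_⟩
  intro r _ hr
  obtain ⟨z₁, hz₁⟩ := hr 2 1 (by norm_num)
  obtain ⟨z₂, hz₂⟩ := hr 4 2 (by norm_num)
  rw [A_three_two_one] at hz₁
  rw [A_three_four_two] at hz₂
  have h2 : 2 ∣ r := Nat.dvd_of_cast_mul_div_eq_intCast (p := 5) (by norm_num) (by norm_num) hz₁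
  have h5 : 5 ∣ r := Nat.dvd_of_cast_mul_div_eq_intCast (p := 63) (by norm_num) (by norm_num) hz₂
  exact Nat.Coprime.mul_dvd_of_dvd_of_dvd (by norm_num) h2 h5
end

section
/- Let p be a prime, let ν be a nonnegative integer with 2ν < p, let k = p, and let n be a positive integer. Then W_n(ν; 2k) ≡ n (mod p), i.e., the p-adic valuation of the rational number W_n(ν;2p) − n is at least 1. -/
/-- `W n ν k` is the `2k`-th moment `W_n(ν; 2k)`, given as a sum over all `n`-tuples of
nonnegative integers summing to `k`. -/
def W (n ν k : ℕ) : ℚ :=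
  ∑ f ∈ Finset.Nat.antidiagonalTuple n k,
    ((k.factorial : ℚ) * ((k + ν).factorial : ℚ) * ((ν.factorial : ℚ)) ^ (n - 1)) /
      ((∏ i, ((f i).factorial : ℚ)) * ∏ i, ((f i + ν).factorial : ℚ))

/-!
The tuples with a coordinate equal to `p` are the `n` tuples `p • eᵢ`, and each contributes
exactly `1`. Every other tuple has all `fᵢ < p`, so `∏ fᵢ!` is prime to `p` while the numerator
`p! (p + ν)!` is divisible by `p²`. Each `fᵢ + ν` is below `2p`, and since `2ν < p` at most one
of them reaches `p`; hence `p² ∤ ∏ (fᵢ + ν)!` and the term is divisible by `p`.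
-/

open Finset
open scoped Nat

theorem Nat.Prime.not_sq_dvd_factorial_of_lt_two_mul {p m : ℕ} (hp : p.Prime) (hm : m < 2 * p) :
    ¬ p ^ 2 ∣ m ! := by
  have hlog : Nat.log p m < 2 := Nat.log_lt_of_lt_pow' (by omega) (by nlinarith [hp.two_le])
  rw [hp.pow_dvd_factorial_iff hlog, Nat.Ico_succ_singleton, sum_singleton, pow_one,
    not_le, Nat.div_lt_iff_lt_mul hp.pos]
  lia

theorem Nat.Prime.not_sq_dvd_prod {ι : Type*} {p : ℕ} (hp : p.Prime) {s : Finset ι} {g : ι → ℕ}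
    (hsq : ∀ i ∈ s, ¬ p ^ 2 ∣ g i) (huniq : ∀ i ∈ s, ∀ j ∈ s, p ∣ g i → p ∣ g j → i = j) :
    ¬ p ^ 2 ∣ ∏ i ∈ s, g i := by
  classical
  by_cases hdvd : ∃ i ∈ s, p ∣ g i
  · obtain ⟨i, hi, hpi⟩ := hdvd
    have hrest : ¬ p ∣ ∏ j ∈ s.erase i, g j := by
      rw [hp.prime.dvd_finsetProd_iff]
      rintro ⟨j, hj, hpj⟩
      exact (mem_erase.mp hj).1 (huniq j (mem_of_mem_erase hj) i hi hpj hpi)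
    rw [← mul_prod_erase s g hi]
    intro h
    exact hsq i hi (((hp.coprime_iff_not_dvd.mpr hrest).pow_left 2).dvd_of_dvd_mul_right h)
  · push Not at hdvd
    have hprod : ¬ p ∣ ∏ i ∈ s, g i := by
      rw [hp.prime.dvd_finsetProd_iff]
      exact fun ⟨i, hi, hpi⟩ => hdvd i hi hpi
    exact fun h => hprod ((dvd_pow_self p two_ne_zero).trans h)

theorem eq_of_le_add_of_le_add {ι : Type*} {s : Finset ι} {f : ι → ℕ} {p ν : ℕ}
    (hν : 2 * ν < p) (hsum : ∑ i ∈ s, f i ≤ p) {i j : ι} (hi : i ∈ s) (hj : j ∈ s)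
    (hpi : p ≤ f i + ν) (hpj : p ≤ f j + ν) : i = j := by
  by_contra hij
  have := add_le_sum (fun k _ => Nat.zero_le (f k)) hi hj hij
  omega

theorem eq_single_of_mem_antidiagonalTuple {n k : ℕ} {f : Fin n → ℕ}
    (hf : f ∈ Nat.antidiagonalTuple n k) {i : Fin n} (hi : f i = k) : f = Pi.single i k := by
  rw [Nat.mem_antidiagonalTuple, ← add_sum_erase _ _ (mem_univ i), hi, add_eq_left,
    sum_eq_zero_iff] at hf
  ext j
  rcases eq_or_ne j i with rfl | hj
  · simp [hi]
  · simp [hj, hf j (mem_erase.mpr ⟨hj, mem_univ j⟩)]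

def wTerm (n ν k : ℕ) (f : Fin n → ℕ) : ℚ :=
  ((k.factorial : ℚ) * ((k + ν).factorial : ℚ) * ((ν.factorial : ℚ)) ^ (n - 1)) /
    ((∏ i, ((f i).factorial : ℚ)) * ∏ i, ((f i + ν).factorial : ℚ))

theorem W_eq_sum_wTerm (n ν k : ℕ) :
    W n ν k = ∑ f ∈ Nat.antidiagonalTuple n k, wTerm n ν k f := rfl

theorem wTerm_eq_natCast_div (n ν k : ℕ) (f : Fin n → ℕ) :
    wTerm n ν k f = ((k ! * (k + ν)! * ν ! ^ (n - 1) : ℕ) : ℚ) /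
      (((∏ i, (f i)!) * ∏ i, (f i + ν)! : ℕ) : ℚ) := by
  simp only [wTerm]
  push_cast
  rfl

theorem wTerm_single (ν k : ℕ) {n : ℕ} (i : Fin n) : wTerm n ν k (Pi.single i k) = 1 := by
  have hfac : ∏ j, ((Pi.single i k : Fin n → ℕ) j)! = k ! := by
    rw [prod_eq_single i (fun j _ hj => by simp [hj]) (by simp)]
    simp
  have hshift : ∏ j, ((Pi.single i k : Fin n → ℕ) j + ν)! = (k + ν)! * ν ! ^ (n - 1) := by
    rw [← mul_prod_erase _ _ (mem_univ i), prod_congr rfl fun j hj => by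
      rw [Pi.single_eq_of_ne (mem_erase.mp hj).1, zero_add], prod_const, card_erase_of_mem
      (mem_univ i), card_univ, Fintype.card_fin, Pi.single_eq_same]
  rw [wTerm_eq_natCast_div, hfac, hshift, mul_assoc, div_self]
  positivity

theorem W_sub_eq_sum_filter {n k : ℕ} (ν : ℕ) (hk : k ≠ 0) :
    W n ν k - n = ∑ f ∈ (Nat.antidiagonalTuple n k).filter (fun f => ∀ i, f i ≠ k),
      wTerm n ν k f := by
  classical
  have hinj : Function.Injective fun i : Fin n => (Pi.single i k : Fin n → ℕ) := fun i j h => by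
    simpa [Pi.single_apply, hk] using congrFun h i
  have hsingles : (Nat.antidiagonalTuple n k).filter (fun f => ¬ ∀ i, f i ≠ k)
      = univ.map ⟨_, hinj⟩ := by
    ext f
    simp only [mem_filter, mem_map, mem_univ, true_and, Function.Embedding.coeFn_mk]
    push Not
    constructor
    · rintro ⟨hf, i, hi⟩
      exact ⟨i, (eq_single_of_mem_antidiagonalTuple hf hi).symm⟩
    · rintro ⟨i, rfl⟩
      exact ⟨by simp [Nat.mem_antidiagonalTuple], i, by simp⟩
  rw [W_eq_sum_wTerm, ← sum_filter_add_sum_filter_not _ (fun f => ∀ i, f i ≠ k), hsingles,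
    sum_map]
  simp [wTerm_single]

/-- `p ℤ₍ₚ₎`: the rationals of `p`-adic valuation at least one. -/
def pDivisible {p : ℕ} (hp : p.Prime) : AddSubgroup ℚ where
  carrier := {x | ∃ a b : ℤ, ¬ (p : ℤ) ∣ b ∧ x = p * (a / b)}
  zero_mem' := ⟨0, 1, by exact_mod_cast hp.not_dvd_one, by simp⟩
  add_mem' := by
    rintro _ _ ⟨a, b, hb, rfl⟩ ⟨c, d, hd, rfl⟩
    refine ⟨a * d + c * b, b * d, fun h => (Int.Prime.dvd_mul' hp h).elim hb hd, ?_⟩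
    have hb0 : (b : ℚ) ≠ 0 := Int.cast_ne_zero.mpr (by rintro rfl; exact hb (dvd_zero _))
    have hd0 : (d : ℚ) ≠ 0 := Int.cast_ne_zero.mpr (by rintro rfl; exact hd (dvd_zero _))
    push_cast
    field_simp
  neg_mem' := by
    rintro _ ⟨a, b, hb, rfl⟩
    exact ⟨-a, b, hb, by push_cast; ring⟩

theorem natCast_div_mem_pDivisible {p : ℕ} (hp : p.Prime) {A B : ℕ} (hA : p ^ 2 ∣ A)
    (hB : ¬ p ^ 2 ∣ B) : (A / B : ℚ) ∈ pDivisible hp := by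
  obtain ⟨A', rfl⟩ := hA
  by_cases hpB : p ∣ B
  · obtain ⟨B', rfl⟩ := hpB
    have hpB' : ¬ p ∣ B' := fun h => hB (pow_two p ▸ mul_dvd_mul_left p h)
    have hB'0 : (B' : ℚ) ≠ 0 := Nat.cast_ne_zero.mpr (by rintro rfl; exact hpB' (dvd_zero _))
    have hp0 : (p : ℚ) ≠ 0 := by exact_mod_cast hp.ne_zero
    refine ⟨A', B', by exact_mod_cast hpB', ?_⟩
    push_cast
    field_simp
  · exact ⟨p * A', B, by exact_mod_cast hpB, by push_cast; ring⟩

theorem wTerm_mem_pDivisible {p ν n : ℕ} (hp : p.Prime) (hν : 2 * ν < p) {f : Fin n → ℕ}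
    (hf : f ∈ Nat.antidiagonalTuple n p) (hne : ∀ i, f i ≠ p) :
    wTerm n ν p f ∈ pDivisible hp := by
  have hsum := Nat.mem_antidiagonalTuple.mp hf
  have hlt : ∀ i, f i < p := fun i =>
    (hsum ▸ single_le_sum (fun j _ => Nat.zero_le (f j)) (mem_univ i)).lt_of_ne (hne i)
  have hunit : ¬ p ∣ ∏ i, (f i)! := by
    rw [hp.prime.dvd_finsetProd_iff]
    rintro ⟨i, -, h⟩
    exact (hlt i).not_ge (hp.dvd_factorial.mp h)
  have hshift : ¬ p ^ 2 ∣ ∏ i, (f i + ν)! :=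
    hp.not_sq_dvd_prod (fun i _ => hp.not_sq_dvd_factorial_of_lt_two_mul (by grind))
      fun i _ j _ hi hj => eq_of_le_add_of_le_add hν hsum.le (mem_univ i) (mem_univ j)
        (hp.dvd_factorial.mp hi) (hp.dvd_factorial.mp hj)
  rw [wTerm_eq_natCast_div]
  refine natCast_div_mem_pDivisible hp ?_ fun h => hshift ?_
  · exact pow_two p ▸ (mul_dvd_mul (hp.dvd_factorial.mpr le_rfl)
      (hp.dvd_factorial.mpr (Nat.le_add_right p ν))).mul_right _
  · exact ((hp.coprime_iff_not_dvd.mpr hunit).pow_left 2).dvd_of_dvd_mul_left h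

theorem stmt8_general (p : ℕ) (hp : p.Prime) (ν : ℕ) (hν : 2 * ν < p) (n : ℕ) :
    ∃ a b : ℤ, ¬ (p : ℤ) ∣ b ∧ W n ν p - (n : ℚ) = (p : ℚ) * ((a : ℚ) / (b : ℚ)) := by
  have hmem : W n ν p - n ∈ pDivisible hp := by
    rw [W_sub_eq_sum_filter ν hp.ne_zero]
    exact AddSubgroup.sum_mem _ fun f hf =>
      wTerm_mem_pDivisible hp hν (mem_filter.mp hf).1 (mem_filter.mp hf).2
  exact hmem

/-- If `p` is prime, `2ν < p` and `k = p`, then `W_n(ν;2k) ≡ n (mod p)`: the difference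
`W_n(ν;2p) − n` can be written as `p·(a/b)` with `p ∤ b`. -/
theorem stmt8 (p : ℕ) (hp : p.Prime) (ν : ℕ) (hν : 2 * ν < p) (n : ℕ) (hn : 0 < n) :
    ∃ a b : ℤ, ¬ (p : ℤ) ∣ b ∧ W n ν p - (n : ℚ) = (p : ℚ) * ((a : ℚ) / (b : ℚ)) :=
  stmt8_general p hp ν hν n
end

section
/- Let p be a prime, let ν be a nonnegative integer with ν < p, let k = p − ν (so p = k + ν), and let n be a positive integer. Then W_n(ν; 2k) ≡ n (mod p), i.e., the p-adic valuation of the rational number W_n(ν;2k) − n is at least 1. -/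
private lemma not_dvd_one' {p : ℕ} (hp : p.Prime) : ¬ (p:ℤ) ∣ (1:ℤ) := by
  intro h
  have h1 : (p:ℤ) ≤ 1 := Int.le_of_dvd one_pos h
  have h2 : p ≤ 1 := by exact_mod_cast h1
  have := hp.two_le
  omega

private lemma sum_pint {p : ℕ} (hp : p.Prime) {α : Type*} [DecidableEq α] (s : Finset α)
    (g : α → ℚ) (h : ∀ x ∈ s, ∃ a b : ℤ, ¬ (p:ℤ) ∣ b ∧ g x = (a:ℚ) / (b:ℚ)) :
    ∃ a b : ℤ, ¬ (p:ℤ) ∣ b ∧ ∑ x ∈ s, g x = (a:ℚ) / (b:ℚ) := by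
  classical
  induction s using Finset.induction_on with
  | empty => exact ⟨0, 1, not_dvd_one' hp, by simp⟩
  | @insert c s' hx ih =>
    obtain ⟨a₁, b₁, hb₁, e₁⟩ := h c (Finset.mem_insert_self _ _)
    obtain ⟨a₂, b₂, hb₂, e₂⟩ := ih (fun x hxs => h x (Finset.mem_insert_of_mem hxs))
    have hpI : Prime (p:ℤ) := Nat.prime_iff_prime_int.mp hp
    refine ⟨a₁ * b₂ + a₂ * b₁, b₁ * b₂, ?_, ?_⟩
    · intro hd
      rcases hpI.dvd_mul.mp hd with hd | hd
      · exact hb₁ hd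
      · exact hb₂ hd
    · have hb₁0 : (b₁:ℚ) ≠ 0 := by
        intro h0
        apply hb₁
        have : b₁ = 0 := by exact_mod_cast h0
        simp [this]
      have hb₂0 : (b₂:ℚ) ≠ 0 := by
        intro h0
        apply hb₂
        have : b₂ = 0 := by exact_mod_cast h0
        simp [this]
      rw [Finset.sum_insert hx, e₁, e₂]
      push_cast
      field_simp

/-- If `p = k + ν` is prime with `ν < p`, then `W_n(ν;2k) ≡ n (mod p)`: the difference
`W_n(ν;2k) − n` can be written as `p·(a/b)` with `p ∤ b`. -/
theorem stmt9 (p : ℕ) (hp : p.Prime) (ν k : ℕ) (hν : ν < p) (hk : k + ν = p)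
    (n : ℕ) (hn : 0 < n) :
    ∃ a b : ℤ, ¬ (p : ℤ) ∣ b ∧ W n ν k - (n : ℚ) = (p : ℚ) * ((a : ℚ) / (b : ℚ)) := by
  classical
  have hk0 : 0 < k := by omega
  have hkp : k ≤ p := by omega
  have hp0 : (p:ℚ) ≠ 0 := by
    exact_mod_cast hp.pos.ne'
  have hpfacN : (k + ν).factorial = p * (p-1).factorial := by
    rw [hk]
    conv_lhs => rw [show p = (p-1)+1 by omega]
    rw [Nat.factorial_succ]
    congr 1
    omega
  set t : (Fin n → ℕ) → ℚ := fun f =>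
    ((k.factorial : ℚ) * ((k + ν).factorial : ℚ) * ((ν.factorial : ℚ)) ^ (n - 1)) /
      ((∏ i, ((f i).factorial : ℚ)) * ∏ i, ((f i + ν).factorial : ℚ)) with ht
  have hW : W n ν k = ∑ f ∈ Finset.Nat.antidiagonalTuple n k, t f := rfl
  set T : Finset (Fin n → ℕ) := Finset.Nat.antidiagonalTuple n k with hTdef
  set C : Finset (Fin n → ℕ) := Finset.univ.image (fun i => Pi.single i k) with hCdef
  have hCsub : C ⊆ T := by
    intro f hf
    simp only [hCdef, Finset.mem_image] at hf
    obtain ⟨i, -, rfl⟩ := hf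
    rw [hTdef, Finset.Nat.mem_antidiagonalTuple]
    simp
  -- each corner value is 1
  have hprod1 : ∀ i : Fin n,
      (∏ j, (((Pi.single i k : Fin n → ℕ) j).factorial : ℚ)) = (k.factorial : ℚ) := by
    intro i
    rw [Finset.prod_eq_single i]
    · rw [Pi.single_eq_same]
    · intro j _ hj
      rw [Pi.single_eq_of_ne hj]
      simp
    · simp
  have hprod2 : ∀ i : Fin n,
      (∏ j, (((Pi.single i k : Fin n → ℕ) j + ν).factorial : ℚ))
        = ((k+ν).factorial : ℚ) * ((ν.factorial : ℚ)) ^ (n-1) := by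
    intro i
    rw [← Finset.mul_prod_erase _ _ (Finset.mem_univ i), Pi.single_eq_same]
    congr 1
    have hke : ∀ j ∈ Finset.univ.erase i,
        (((Pi.single i k : Fin n → ℕ) j + ν).factorial : ℚ) = (ν.factorial : ℚ) := by
      intro j hj
      rw [Pi.single_eq_of_ne (Finset.ne_of_mem_erase hj)]
      norm_num
    rw [Finset.prod_congr rfl hke, Finset.prod_const,
        Finset.card_erase_of_mem (Finset.mem_univ i), Finset.card_univ, Fintype.card_fin]
  have hcorner : ∀ i : Fin n, t (Pi.single i k) = 1 := by
    intro i
    rw [ht]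
    simp only
    rw [hprod1 i, hprod2 i]
    have hden : (k.factorial : ℚ) * (((k+ν).factorial : ℚ) * ((ν.factorial : ℚ)) ^ (n-1)) ≠ 0 := by
      positivity
    rw [div_eq_one_iff_eq hden]
    ring
  have hinj : Function.Injective (fun i : Fin n => (Pi.single i k : Fin n → ℕ)) := by
    intro i j hij
    by_contra hne
    have hij' : (Pi.single i k : Fin n → ℕ) = Pi.single j k := hij
    have h1 := congrFun hij' i
    rw [Pi.single_eq_same, Pi.single_eq_of_ne hne] at h1
    omega
  have hCsum : ∑ f ∈ C, t f = (n:ℚ) := by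
    rw [hCdef, Finset.sum_image (fun x _ y _ h => hinj h)]
    rw [Finset.sum_congr rfl (fun i _ => hcorner i)]
    simp
  have hsplit : ∑ f ∈ T, t f = (∑ f ∈ T \ C, t f) + ∑ f ∈ C, t f :=
    (Finset.sum_sdiff hCsub).symm
  -- off-corner tuples: all entries small
  have hsmall : ∀ f ∈ T \ C, ∀ i, f i < k := by
    intro f hf i
    rw [Finset.mem_sdiff] at hf
    obtain ⟨hfT, hfC⟩ := hf
    have hsumf : ∑ j, f j = k := by
      rw [hTdef, Finset.Nat.mem_antidiagonalTuple] at hfT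
      exact hfT
    by_contra hge
    push_neg at hge
    have hle : f i ≤ k := hsumf ▸ Finset.single_le_sum
      (fun j _ => Nat.zero_le (f j)) (Finset.mem_univ i)
    have hfi : f i = k := le_antisymm hle hge
    have herase : ∑ j ∈ Finset.univ.erase i, f j = 0 := by
      have := Finset.sum_erase_add Finset.univ f (Finset.mem_univ i)
      omega
    have hz : ∀ j, j ≠ i → f j = 0 := by
      intro j hj
      have := (Finset.sum_eq_zero_iff).mp herase j
        (Finset.mem_erase.mpr ⟨hj, Finset.mem_univ j⟩)
      exact this
    apply hfC
    rw [hCdef, Finset.mem_image]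
    refine ⟨i, Finset.mem_univ i, ?_⟩
    funext j
    by_cases hji : j = i
    · subst hji; rw [Pi.single_eq_same, hfi]
    · rw [Pi.single_eq_of_ne hji, hz j hji]
  -- each off-corner term divided by p is p-integral
  have hterm : ∀ f ∈ T \ C, ∃ a b : ℤ, ¬ (p:ℤ) ∣ b ∧ t f / (p:ℚ) = (a:ℚ) / (b:ℚ) := by
    intro f hf
    set natb : ℕ := (∏ i, (f i).factorial) * ∏ i, (f i + ν).factorial with hnatb
    refine ⟨(k.factorial * (p-1).factorial * ν.factorial ^ (n-1) : ℕ), (natb : ℤ), ?_, ?_⟩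
    · rw [Int.natCast_dvd_natCast]
      intro hd
      rcases (Nat.Prime.dvd_mul hp).mp hd with hd | hd
      · obtain ⟨i, -, hdvd⟩ := hp.prime.exists_mem_finset_dvd hd
        rw [Nat.Prime.dvd_factorial hp] at hdvd
        have := hsmall f hf i
        omega
      · obtain ⟨i, -, hdvd⟩ := hp.prime.exists_mem_finset_dvd hd
        rw [Nat.Prime.dvd_factorial hp] at hdvd
        have := hsmall f hf i
        omega
    · have hte : t f = (p:ℚ) *
          (((k.factorial * (p-1).factorial * ν.factorial ^ (n-1) : ℕ) : ℚ) / ((natb : ℤ) : ℚ)) := by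
        rw [ht]
        simp only
        have hnum : ((k.factorial : ℚ) * ((k + ν).factorial : ℚ) * ((ν.factorial : ℚ)) ^ (n - 1))
            = (p:ℚ) * ((k.factorial * (p-1).factorial * ν.factorial ^ (n-1) : ℕ) : ℚ) := by
          rw [hpfacN]
          push_cast
          ring
        have hden : ((∏ i, ((f i).factorial : ℚ)) * ∏ i, ((f i + ν).factorial : ℚ))
            = ((natb : ℤ) : ℚ) := by
          rw [hnatb]
          push_cast
          ring
        rw [hnum, hden, mul_div_assoc]
      rw [hte, mul_div_cancel_left₀ _ hp0]
      norm_cast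
  obtain ⟨a, b, hb, he⟩ := sum_pint hp (T \ C) (fun f => t f / (p:ℚ)) hterm
  refine ⟨a, b, hb, ?_⟩
  have hWn : W n ν k - (n:ℚ) = ∑ f ∈ T \ C, t f := by
    rw [hW, hsplit, hCsum]
    ring
  rw [hWn]
  rw [← Finset.sum_div, div_eq_iff hp0] at he
  rw [he]
  ring
end

section
/- Let p be a prime, let k = p², and let n be a positive integer. Then W_n(0; 2k) ≡ n (mod p²), i.e., the p-adic valuation of the rational number W_n(0;2p²) − n is at least 2. -/
open Finset

theorem Pi.single_left_injective {ι M : Type*} [DecidableEq ι] [Zero M] {x : M} (hx : x ≠ 0) :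
    Function.Injective fun i : ι ↦ Pi.single i x := fun i j h ↦ by
  simpa [Pi.single_apply, hx] using congrFun h i

namespace Nat

variable {ι : Type*}

theorem multinomial_cast_eq_div [Fintype ι] {k : ℕ} {f : ι → ℕ} (hf : ∑ i, f i = k) :
    (multinomial univ f : ℚ) = k ! / ∏ i, ((f i)! : ℚ) := by
  rw [eq_div_iff (by positivity), mul_comm]
  exact_mod_cast hf ▸ multinomial_spec univ f

theorem eq_pi_single_of_sum_eq_of_apply_eq [Fintype ι] [DecidableEq ι] {k : ℕ} {f : ι → ℕ}
    (hf : ∑ i, f i = k) {i : ι} (hi : f i = k) : f = Pi.single i k := by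
  funext j
  rcases eq_or_ne j i with rfl | hji
  · simp [hi]
  · have : f j + f i ≤ k := by
      rw [← hf, ← sum_pair hji]
      exact sum_le_sum_of_subset (subset_univ _)
    simp only [Pi.single_apply, hji, if_false]
    omega

theorem Prime.dvd_multinomial_of_ne_pi_single [Fintype ι] [DecidableEq ι] {p m : ℕ}
    (hp : p.Prime) {f : ι → ℕ} (hf : ∑ i, f i = p ^ m)
    (hsingle : ∀ i, f ≠ Pi.single i (p ^ m)) :
    p ∣ multinomial univ f := by
  obtain ⟨i, hi⟩ : ∃ i, f i ≠ 0 := by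
    by_contra! h
    simp [h, (pow_pos hp.pos m).ne] at hf
  have hik : f i ≠ p ^ m := fun h ↦ hsingle i (eq_pi_single_of_sum_eq_of_apply_eq hf h)
  rw [← insert_erase (mem_univ i), multinomial_insert (notMem_erase i _),
    add_sum_erase _ _ (mem_univ i), hf]
  exact (hp.dvd_choose_pow hi hik).mul_right _

end Nat

open Nat

theorem W_zero_eq_sum_multinomial_sq (n k : ℕ) :
    W n 0 k = ((∑ f ∈ Nat.antidiagonalTuple n k, multinomial univ f ^ 2 : ℕ) : ℚ) := by
  rw [W]
  push_cast
  refine sum_congr rfl fun f hf ↦ ?_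
  rw [multinomial_cast_eq_div (Nat.mem_antidiagonalTuple.mp hf)]
  simp only [add_zero, factorial_zero, cast_one, one_pow, mul_one]
  ring

theorem sum_multinomial_pow_modEq {p : ℕ} (hp : p.Prime) (m r n : ℕ) :
    ∑ f ∈ Nat.antidiagonalTuple n (p ^ m), multinomial univ f ^ r ≡ n [MOD p ^ r] := by
  set corners := univ.image fun i : Fin n ↦ Pi.single i (p ^ m)
  have hcorners : corners ⊆ Nat.antidiagonalTuple n (p ^ m) := by
    simp [corners, subset_iff, Nat.mem_antidiagonalTuple]
  have hcorners_sum : ∑ f ∈ corners, multinomial univ f ^ r = n := by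
    rw [sum_image fun i _ j _ ↦ (Pi.single_left_injective (pow_pos hp.pos m).ne' ·)]
    simp [multinomial_single]
  have hrest :
      p ^ r ∣ ∑ f ∈ Nat.antidiagonalTuple n (p ^ m) \ corners, multinomial univ f ^ r := by
    refine dvd_sum fun f hf ↦ pow_dvd_pow_of_dvd ?_ r
    simp only [mem_sdiff, Nat.mem_antidiagonalTuple, corners, mem_image, mem_univ, true_and,
      not_exists] at hf
    exact hp.dvd_multinomial_of_ne_pi_single hf.1 fun i h ↦ hf.2 i h.symm
  rw [← sum_sdiff hcorners, hcorners_sum, add_comm]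
  simpa using (Nat.modEq_zero_iff_dvd.mpr hrest).add_right n

theorem stmt10_general (p : ℕ) (hp : p.Prime) (n : ℕ) :
    ∃ a b : ℤ, ¬ (p : ℤ) ∣ b ∧
      W n 0 (p ^ 2) - (n : ℚ) = ((p : ℚ) ^ 2) * ((a : ℚ) / (b : ℚ)) := by
  have hmod := Int.natCast_modEq_iff.mpr (sum_multinomial_pow_modEq hp 2 2 n)
  obtain ⟨a, ha⟩ := hmod.symm.dvd
  refine ⟨a, 1, fun h ↦ hp.not_dvd_one (Int.natCast_dvd_natCast.mp h), ?_⟩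
  rw [W_zero_eq_sum_multinomial_sq, Int.cast_one, div_one]
  exact_mod_cast ha

/-- If `p` is prime and `k = p²`, then `W_n(0;2k) ≡ n (mod p²)`: the difference
`W_n(0;2p²) − n` can be written as `p²·(a/b)` with `p ∤ b`. -/
theorem stmt10 (p : ℕ) (hp : p.Prime) (n : ℕ) (hn : 0 < n) :
    ∃ a b : ℤ, ¬ (p : ℤ) ∣ b ∧
      W n 0 (p ^ 2) - (n : ℚ) = ((p : ℚ) ^ 2) * ((a : ℚ) / (b : ℚ)) :=
  stmt10_general p hp n
end

section
/- Let ν and k be nonnegative integers such that p₁ := k and p₂ := k + ν are both prime and 2ν < p₁, and let n be a positive integer. Then W_n(ν; 2k) ≡ n (mod p₁p₂); that is, the p₁-adic valuation of W_n(ν;2k) − n is at least 1 and the p₂-adic valuation of W_n(ν;2k) − n is at least 1. -/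
open Finset Finset.Nat
open scoped Nat

/-- `q ∈ p ℤ_(p)`: the form in which the statement expresses `q ≡ 0 (mod p)`. -/
def PadicDvd (p : ℕ) (q : ℚ) : Prop :=
  ∃ a b : ℤ, ¬ (p : ℤ) ∣ b ∧ q = (p : ℚ) * ((a : ℚ) / (b : ℚ))

namespace PadicDvd

theorem zero {p : ℕ} (hp : p.Prime) : PadicDvd p 0 :=
  ⟨0, 1, by exact_mod_cast hp.not_dvd_one, by simp⟩

theorem add {p : ℕ} (hp : p.Prime) {q r : ℚ} (hq : PadicDvd p q) (hr : PadicDvd p r) :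
    PadicDvd p (q + r) := by
  obtain ⟨a, b, hb, rfl⟩ := hq
  obtain ⟨c, d, hd, rfl⟩ := hr
  have hb0 : (b : ℚ) ≠ 0 := Int.cast_ne_zero.2 fun h => hb (h ▸ dvd_zero _)
  have hd0 : (d : ℚ) ≠ 0 := Int.cast_ne_zero.2 fun h => hd (h ▸ dvd_zero _)
  refine ⟨a * d + c * b, b * d, (Nat.prime_iff_prime_int.mp hp).not_dvd_mul hb hd, ?_⟩
  push_cast
  field_simp

theorem sum {p : ℕ} (hp : p.Prime) {ι : Type*} {s : Finset ι} {g : ι → ℚ}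
    (h : ∀ i ∈ s, PadicDvd p (g i)) : PadicDvd p (∑ i ∈ s, g i) :=
  Finset.sum_induction g (PadicDvd p) (fun _ _ => add hp) (zero hp) h

theorem natCast_div {p N D e : ℕ} (hp : p.Prime) (hD : D ≠ 0)
    (hvD : padicValNat p D ≤ e) (hN : p ^ (e + 1) ∣ N) : PadicDvd p ((N : ℚ) / D) := by
  have := Fact.mk hp
  obtain ⟨t, D', hD', rfl⟩ := Nat.exists_eq_pow_mul_and_not_dvd hD p hp.ne_one
  have hD'0 : D' ≠ 0 := fun h => hD' (h ▸ dvd_zero p)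
  rw [padicValNat.mul (pow_ne_zero _ hp.ne_zero) hD'0, padicValNat.prime_pow,
    padicValNat.eq_zero_of_not_dvd hD', add_zero] at hvD
  obtain ⟨s, rfl⟩ := Nat.exists_eq_add_of_le hvD
  obtain ⟨M, rfl⟩ := hN
  refine ⟨p ^ s * M, D', by exact_mod_cast hD', ?_⟩
  have hp0 : (p : ℚ) ≠ 0 := by exact_mod_cast hp.ne_zero
  have hD'0' : (D' : ℚ) ≠ 0 := by exact_mod_cast hD'0
  push_cast
  field_simp
  ring

end PadicDvd

theorem padicValNat_factorial_of_lt_sq {p m : ℕ} [Fact p.Prime] (hm : m < p ^ 2) :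
    padicValNat p m ! = m / p := by
  rw [padicValNat_factorial (Nat.log_lt_of_lt_pow' two_ne_zero hm)]
  simp

theorem padicValNat_prod_factorial {p : ℕ} [Fact p.Prime] {ι : Type*} (s : Finset ι)
    (g : ι → ℕ) (hg : ∀ i ∈ s, g i < p ^ 2) :
    padicValNat p (∏ i ∈ s, (g i)!) = ∑ i ∈ s, g i / p := by
  classical
  induction s using Finset.induction_on with
  | empty => simp
  | insert j s hj ih =>
    rw [prod_insert hj, sum_insert hj, padicValNat.mul (Nat.factorial_ne_zero _)
      (prod_ne_zero_iff.2 fun i _ => Nat.factorial_ne_zero _),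
      padicValNat_factorial_of_lt_sq (hg j (mem_insert_self j s)),
      ih fun i hi => hg i (mem_insert_of_mem hi)]

theorem Nat.sum_div_le_sum_div {ι : Type*} (s : Finset ι) (g : ι → ℕ) (m : ℕ) :
    ∑ i ∈ s, g i / m ≤ (∑ i ∈ s, g i) / m := by
  rcases m.eq_zero_or_pos with rfl | hm
  · simp
  rw [Nat.le_div_iff_mul_le hm, sum_mul]
  exact sum_le_sum fun i _ => Nat.div_mul_le_self _ _

def wNum (n ν k : ℕ) : ℕ := k ! * (k + ν)! * ν ! ^ (n - 1)

def wDen (ν : ℕ) {n : ℕ} (f : Fin n → ℕ) : ℕ := (∏ i, (f i)!) * ∏ i, (f i + ν)!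

theorem W_eq_sum_wNum_div_wDen (n ν k : ℕ) :
    W n ν k = ∑ f ∈ antidiagonalTuple n k, (wNum n ν k : ℚ) / wDen ν f := by
  simp [W, wNum, wDen]

theorem wDen_ne_zero (ν : ℕ) {n : ℕ} (f : Fin n → ℕ) : wDen ν f ≠ 0 :=
  mul_ne_zero (prod_ne_zero_iff.2 fun _ _ => Nat.factorial_ne_zero _)
    (prod_ne_zero_iff.2 fun _ _ => Nat.factorial_ne_zero _)

theorem wDen_single {n : ℕ} (ν k : ℕ) (i : Fin n) : wDen ν (Pi.single i k) = wNum n ν k := by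
  classical
  have hprod : ∀ g : ℕ → ℕ, ∏ j, g ((Pi.single i k : Fin n → ℕ) j) = g k * g 0 ^ (n - 1) := by
    intro g
    rw [Fintype.prod_eq_mul_prod_compl i, Pi.single_eq_same,
      prod_congr rfl fun j hj => by rw [Pi.single_eq_of_ne (by simpa using hj)], prod_const,
      card_compl, card_singleton, Fintype.card_fin]
  rw [wDen, wNum, hprod (·!), hprod fun m => (m + ν)!]
  simp only [Nat.factorial_zero, one_pow, mul_one, zero_add, mul_assoc]

theorem padicValNat_wDen {p ν n : ℕ} [Fact p.Prime] {f : Fin n → ℕ}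
    (hf : ∀ i, f i + ν < p ^ 2) :
    padicValNat p (wDen ν f) = ∑ i, f i / p + ∑ i, (f i + ν) / p := by
  rw [wDen, padicValNat.mul (prod_ne_zero_iff.2 fun _ _ => Nat.factorial_ne_zero _)
      (prod_ne_zero_iff.2 fun _ _ => Nat.factorial_ne_zero _),
    padicValNat_prod_factorial _ _ fun i _ => (Nat.le_add_right _ _).trans_lt (hf i),
    padicValNat_prod_factorial _ _ fun i _ => hf i]

theorem antidiagonalTuple_filter_not_forall_lt (n k : ℕ) :
    (antidiagonalTuple n k).filter (fun f => ¬ ∀ i, f i < k) =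
      univ.image fun i : Fin n => (Pi.single i k : Fin n → ℕ) := by
  ext f
  simp only [mem_filter, mem_antidiagonalTuple, mem_image, mem_univ, true_and, not_forall,
    not_lt]
  constructor
  · rintro ⟨hs, i, hi⟩
    refine ⟨i, funext fun j => ?_⟩
    rcases eq_or_ne j i with rfl | hj
    · have := single_le_sum (f := f) (fun _ _ => Nat.zero_le _) (mem_univ j)
      rw [Pi.single_eq_same]
      omega
    · have := sum_le_sum_of_subset (f := f) (subset_univ {i, j})
      rw [sum_pair hj.symm, hs] at this
      rw [Pi.single_eq_of_ne hj]
      omega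
  · rintro ⟨i, rfl⟩
    exact ⟨by simp, i, by simp⟩

theorem W_sub_natCast_eq {k : ℕ} (hk : k ≠ 0) (n ν : ℕ) :
    W n ν k - n = ∑ f ∈ (antidiagonalTuple n k).filter (fun f => ∀ i, f i < k),
      (wNum n ν k : ℚ) / wDen ν f := by
  have hcorners : ∑ f ∈ (antidiagonalTuple n k).filter (fun f => ¬ ∀ i, f i < k),
      (wNum n ν k : ℚ) / wDen ν f = n := by
    have hinj : Function.Injective fun i : Fin n => (Pi.single i k : Fin n → ℕ) :=
      fun i j h => by simpa [Pi.single_apply, hk] using congrFun h i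
    have hNum : (wNum n ν k : ℚ) ≠ 0 := Nat.cast_ne_zero.2 (by unfold wNum; positivity)
    rw [antidiagonalTuple_filter_not_forall_lt, sum_image fun i _ j _ h => hinj h]
    simp [wDen_single, hNum]
  rw [W_eq_sum_wNum_div_wDen, ← sum_filter_add_sum_filter_not _ (fun f => ∀ i, f i < k),
    hcorners, add_sub_cancel_right]

theorem sum_add_div_le_one {n ν k : ℕ} {f : Fin n → ℕ} (hν : 2 * ν < k)
    (hsum : ∑ i, f i = k) (hlt : ∀ i, f i < k) : ∑ i, (f i + ν) / k ≤ 1 := by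
  have hterm : ∀ i, (f i + ν) / k ≤ f i / (k - ν) := by
    intro i
    rcases lt_or_ge (f i + ν) k with h | h
    · simp [Nat.div_eq_of_lt h]
    · have hle : (f i + ν) / k ≤ 1 :=
        Nat.lt_succ_iff.1 ((Nat.div_lt_iff_lt_mul (by omega)).2 (by have := hlt i; omega))
      exact hle.trans ((Nat.one_le_div_iff (by omega)).2 (by omega))
  calc ∑ i, (f i + ν) / k ≤ ∑ i, f i / (k - ν) := sum_le_sum fun i _ => hterm i
    _ ≤ (∑ i, f i) / (k - ν) := Nat.sum_div_le_sum_div _ _ _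
    _ = 1 := by rw [hsum]; exact Nat.div_eq_of_lt_le (by omega) (by omega)

theorem padicDvd_wNum_div_wDen_left {n ν k : ℕ} {f : Fin n → ℕ} (hk : k.Prime)
    (hν : 2 * ν < k) (hsum : ∑ i, f i = k) (hlt : ∀ i, f i < k) :
    PadicDvd k ((wNum n ν k : ℚ) / wDen ν f) := by
  have := Fact.mk hk
  have hf : ∀ i, f i + ν < k ^ 2 := fun i => by nlinarith [hlt i, hk.two_le]
  refine PadicDvd.natCast_div hk (wDen_ne_zero ν f) (e := 1) ?_ ?_
  · rw [padicValNat_wDen hf, sum_eq_zero fun i _ => Nat.div_eq_of_lt (hlt i), zero_add]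
    exact sum_add_div_le_one hν hsum hlt
  · rw [show 1 + 1 = 2 from rfl, sq, wNum]
    exact (mul_dvd_mul (Nat.dvd_factorial hk.pos le_rfl)
      (Nat.dvd_factorial hk.pos (Nat.le_add_right k ν))).mul_right _

theorem padicDvd_wNum_div_wDen_right {n ν k : ℕ} {f : Fin n → ℕ} (hkν : (k + ν).Prime)
    (hlt : ∀ i, f i < k) :
    PadicDvd (k + ν) ((wNum n ν k : ℚ) / wDen ν f) := by
  have := Fact.mk hkν
  have hf : ∀ i, f i + ν < k + ν := fun i => by have := hlt i; omega
  refine PadicDvd.natCast_div hkν (wDen_ne_zero ν f) (e := 0) ?_ ?_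
  · rw [padicValNat_wDen fun i => (hf i).trans_le (Nat.le_self_pow two_ne_zero _),
      sum_eq_zero fun i _ => Nat.div_eq_of_lt ((Nat.le_add_right _ ν).trans_lt (hf i)),
      sum_eq_zero fun i _ => Nat.div_eq_of_lt (hf i)]
    rfl
  · rw [zero_add, pow_one]
    exact (Nat.dvd_factorial hkν.pos le_rfl).mul_left _ |>.mul_right _

theorem stmt11_general (ν k : ℕ) (hp1 : k.Prime) (hp2 : (k + ν).Prime) (hν : 2 * ν < k)
    (n : ℕ) :
    (∃ a b : ℤ, ¬ (k : ℤ) ∣ b ∧ W n ν k - (n : ℚ) = (k : ℚ) * ((a : ℚ) / (b : ℚ))) ∧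
    (∃ c d : ℤ, ¬ ((k + ν : ℕ) : ℤ) ∣ d ∧
      W n ν k - (n : ℚ) = ((k + ν : ℕ) : ℚ) * ((c : ℚ) / (d : ℚ))) := by
  change PadicDvd k (W n ν k - n) ∧ PadicDvd (k + ν) (W n ν k - n)
  rw [W_sub_natCast_eq hp1.ne_zero]
  refine ⟨PadicDvd.sum hp1 fun f hf => ?_, PadicDvd.sum hp2 fun f hf => ?_⟩ <;>
    rw [mem_filter, mem_antidiagonalTuple] at hf
  · exact padicDvd_wNum_div_wDen_left hp1 hν hf.1 hf.2
  · exact padicDvd_wNum_div_wDen_right hp2 hf.2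

/-- If `p₁ := k` and `p₂ := k + ν` are both prime with `2ν < k`, then
`W_n(ν;2k) ≡ n (mod p₁p₂)`: the difference `W_n(ν;2k) − n` is `p₁·(a/b)` with `p₁ ∤ b`
and also `p₂·(c/d)` with `p₂ ∤ d`. -/
theorem stmt11 (ν k : ℕ) (hp1 : k.Prime) (hp2 : (k + ν).Prime) (hν : 2 * ν < k)
    (n : ℕ) (hn : 0 < n) :
    (∃ a b : ℤ, ¬ (k : ℤ) ∣ b ∧ W n ν k - (n : ℚ) = (k : ℚ) * ((a : ℚ) / (b : ℚ))) ∧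
    (∃ c d : ℤ, ¬ ((k + ν : ℕ) : ℤ) ∣ d ∧
      W n ν k - (n : ℚ) = ((k + ν : ℕ) : ℚ) * ((c : ℚ) / (d : ℚ))) :=
  stmt11_general ν k hp1 hp2 hν n
end

section
/- For ν = 2, the least positive integer r such that r · A_{k,j}(2) is an integer for all nonnegative integers j ≤ k equals 3 = C(3,2). Equivalently: 3 · A_{k,j}(2) ∈ ℤ for all j ≤ k, and for every positive integer r with r · A_{k,j}(2) ∈ ℤ for all j ≤ k, 3 divides r. -/
theorem A_eq_choose_mul_choose_div {ν k j : ℕ} (h : j ≤ k) :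
    A ν k j = k.choose j * (k + ν).choose (j + ν) / (k - j + ν).choose ν := by
  rw [A, Nat.cast_choose ℚ (by omega : j + ν ≤ k + ν), Nat.cast_choose ℚ (by omega : ν ≤ k - j + ν),
    show k + ν - (j + ν) = k - j by omega, Nat.add_sub_cancel]
  field_simp

theorem cast_choose_add_two_add_two (n k : ℕ) :
    ((n + 2).choose (k + 2) : ℚ) = (n + 1) * (n + 2) / ((k + 1) * (k + 2)) * n.choose k := by
  have h₁ : ((n + 1 : ℕ) : ℚ) * n.choose k = (n + 1).choose (k + 1) * (k + 1 : ℕ) := by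
    exact_mod_cast Nat.add_one_mul_choose_eq n k
  have h₂ : ((n + 2 : ℕ) : ℚ) * (n + 1).choose (k + 1) = (n + 2).choose (k + 2) * (k + 2 : ℕ) := by
    exact_mod_cast Nat.add_one_mul_choose_eq (n + 1) (k + 1)
  push_cast at h₁ h₂
  rw [div_mul_eq_mul_div, eq_div_iff (by positivity)]
  linear_combination -(k + 1 : ℚ) * h₂ - (n + 2 : ℚ) * h₁

theorem cast_choose_add_one (a b : ℕ) :
    ((a + b).choose (a + 1) : ℚ) = (a + b).choose a * b / (a + 1) := by
  rw [eq_div_iff (by positivity)]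
  exact_mod_cast (Nat.choose_succ_right_eq (a + b) a).trans (by rw [Nat.add_sub_cancel_left])

theorem cast_choose_add_two (a b : ℕ) :
    ((a + b).choose (a + 2) : ℚ) = (a + b).choose a * (b * (b - 1)) / ((a + 1) * (a + 2)) := by
  have h₁ := (eq_div_iff (by positivity)).mp (cast_choose_add_one a b)
  have h₂ : ((a + b).choose (a + 2) : ℚ) * (a + 2) = (a + b).choose (a + 1) * (b - 1) := by
    rcases b with _ | b
    · simp [Nat.choose_eq_zero_of_lt]
    · have h := Nat.choose_succ_right_eq (a + (b + 1)) (a + 1)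
      rw [show a + (b + 1) - (a + 1) = b by omega] at h
      push_cast
      rw [add_sub_cancel_right]
      exact_mod_cast h
  rw [eq_div_iff (by positivity)]
  linear_combination (a + 1 : ℚ) * h₂ + (b - 1 : ℚ) * h₁

theorem A_two_add (a b : ℕ) :
    A 2 (a + b) a = 2 * (a + b).choose a ^ 2 * ((a + b + 1) * (a + b + 2)) /
      ((a + 1) * (a + 2) * (b + 1) * (b + 2)) := by
  rw [A_eq_choose_mul_choose_div (Nat.le_add_right a b), Nat.add_sub_cancel_left,
    cast_choose_add_two_add_two, Nat.cast_choose_two]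
  push_cast
  rw [add_sub_assoc, show (2 - 1 : ℚ) = 1 by norm_num]
  field_simp

theorem three_mul_A_two_add (a b : ℕ) :
    3 * A 2 (a + b) a = 3 * (a + b).choose a ^ 2
      - 4 * (a + b).choose (a + 1) * (a + b).choose (b + 1)
      + (a + b).choose (a + 2) * (a + b).choose (b + 2) := by
  have h₁ := cast_choose_add_one b a
  have h₂ := cast_choose_add_two b a
  rw [add_comm b a, ← Nat.choose_symm_add] at h₁ h₂
  rw [A_two_add, cast_choose_add_one, cast_choose_add_two, h₁, h₂]
  field_simp
  ring

theorem exists_int_three_mul_A_two {k j : ℕ} (h : j ≤ k) : ∃ z : ℤ, (3 : ℚ) * A 2 k j = z := by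
  obtain ⟨b, rfl⟩ := Nat.exists_eq_add_of_le h
  refine ⟨3 * (j + b).choose j ^ 2 - 4 * (j + b).choose (j + 1) * (j + b).choose (b + 1)
    + (j + b).choose (j + 2) * (j + b).choose (b + 2), ?_⟩
  rw [three_mul_A_two_add]
  push_cast
  rfl

/-- `3 · A_{k,j}(2)` is an integer for all `j ≤ k`, and any positive integer `r` with
`r · A_{k,j}(2)` an integer for all `j ≤ k` is divisible by `3`; i.e. `r₂ = 3 = C(3,2)`. -/
theorem stmt17 :
    (∀ k j : ℕ, j ≤ k → ∃ z : ℤ, (3 : ℚ) * A 2 k j = (z : ℚ)) ∧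
    (∀ r : ℕ, 0 < r → (∀ k j : ℕ, j ≤ k → ∃ z : ℤ, (r : ℚ) * A 2 k j = (z : ℚ)) →
      3 ∣ r) := by
  refine ⟨fun k j h => exists_int_three_mul_A_two h, fun r _ h => ?_⟩
  obtain ⟨z, hz⟩ := h 2 1 (by norm_num)
  have hA : A 2 2 1 = 8 / 3 := by norm_num [A, Nat.factorial]
  have h8 : (8 * r : ℤ) = 3 * z := by
    rw [hA] at hz
    have : (8 * r : ℚ) = 3 * z := by linarith
    exact_mod_cast this
  omega
end
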